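/- arXiv:2108.09167 — 7 statements merged into one kernel-verified Lean document; each statement's English description precedes it below -/
import Mathlib

section
/- For any two probability densities f, g on ℝⁿ, if f majorizes g (in the continuous sense), then for every continuous convex function φ: ℝ₊ → ℝ with φ(0) = 0 (for which the integrals exist), ∫ φ(f(r)) dr ≥ ∫ φ(g(r)) dr. -/
open MeasureTheory Set Filter Topology

lemma chord_le {ψ : ℝ → ℝ} (hconv : ConvexOn ℝ (Ici 0) ψ) {a b c d : ℝ}
    (ha : 0 ≤ a) (hab : a < b) (hcd : c < d) (hac : a ≤ c) (hbd : b ≤ d) :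
    (ψ b - ψ a)/(b-a) ≤ (ψ d - ψ c)/(d-c) := by
  have hc : (0:ℝ) ≤ c := ha.trans hac
  have hbm : b ∈ Ici (0:ℝ) := le_of_lt (lt_of_le_of_lt ha hab)
  have hdm : d ∈ Ici (0:ℝ) := le_of_lt (lt_of_le_of_lt hc hcd)
  have h1 : (ψ b - ψ a)/(b-a) ≤ (ψ d - ψ a)/(d-a) :=
    hconv.secant_mono ha hbm hdm (ne_of_gt hab) (ne_of_gt (lt_of_le_of_lt hac hcd)) hbd
  have h2 : (ψ a - ψ d)/(a-d) ≤ (ψ c - ψ d)/(c-d) :=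
    hconv.secant_mono hdm ha hc (ne_of_lt (lt_of_le_of_lt hac hcd)) (ne_of_lt hcd) hac
  have e1 : (ψ a - ψ d)/(a-d) = (ψ d - ψ a)/(d-a) := by
    rw [← neg_div_neg_eq]; ring_nf
  have e2 : (ψ c - ψ d)/(c-d) = (ψ d - ψ c)/(d-c) := by
    rw [← neg_div_neg_eq]; ring_nf
  rw [e1, e2] at h2
  linarith

/-- convex, 0 at 0, nonneg ⇒ monotone on Ici 0 -/
lemma monoA {ψ : ℝ → ℝ} (hconv : ConvexOn ℝ (Ici 0) ψ) (h0 : ψ 0 = 0)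
    (hpos : ∀ x, 0 ≤ x → 0 ≤ ψ x) : MonotoneOn ψ (Ici 0) := by
  intro x hx y hy hxy
  have hseg : x ∈ segment ℝ (0:ℝ) y := by
    rw [segment_eq_Icc hy]; exact ⟨hx, hxy⟩
  have := hconv.le_on_segment self_mem_Ici hy hseg
  rw [h0] at this
  calc ψ x ≤ max 0 (ψ y) := this
    _ = ψ y := max_eq_right (hpos y hy)

/-- convex, 0 at 0, nonpos ⇒ antitone on Ici 0 -/
lemma antB {ψ : ℝ → ℝ} (hconv : ConvexOn ℝ (Ici 0) ψ) (h0 : ψ 0 = 0)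
    (hneg : ∀ x, 0 ≤ x → ψ x ≤ 0) : AntitoneOn ψ (Ici 0) := by
  intro x hx y hy hxy
  rcases eq_or_lt_of_le hxy with rfl | hlt
  · exact le_refl _
  by_contra hcon
  push_neg at hcon
  have hs : 0 < (ψ y - ψ x)/(y - x) := div_pos (by linarith) (by linarith)
  set s := (ψ y - ψ x)/(y - x) with hsdef
  set z := y + (1 + |ψ y|)/s with hz
  have hyz : y < z := by
    have hd : 0 < (1 + |ψ y|)/s := div_pos (by positivity) hs
    rw [hz]; linarith
  have hch : s ≤ (ψ z - ψ y)/(z - y) :=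
    chord_le hconv hx hlt hyz (le_of_lt hlt) (le_of_lt hyz)
  have hzy : z - y = (1 + |ψ y|)/s := by rw [hz]; ring
  have : ψ z - ψ y ≥ s * (z - y) := by
    have h1 : s * (z - y) ≤ ((ψ z - ψ y)/(z - y)) * (z - y) :=
      mul_le_mul_of_nonneg_right hch (by linarith)
    rw [div_mul_cancel₀] at h1
    · linarith
    · linarith
  have hsz : s * (z - y) = 1 + |ψ y| := by
    rw [hzy, mul_div_cancel₀]; exact ne_of_gt hs
  have hzpos : ψ z > 0 := by
    have := abs_nonneg (ψ y)
    have := neg_abs_le (ψ y)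
    nlinarith [this]
  have := hneg z (by linarith [hx.out, hx.out.trans hxy])
  linarith

noncomputable def sl (ψ : ℝ → ℝ) (h : ℝ) (j : ℕ) : ℝ :=
  (ψ (j * h) - ψ ((j - 1 : ℕ) * h)) / h

lemma sl_zero (ψ : ℝ → ℝ) (h : ℝ) : sl ψ h 0 = 0 := by simp [sl]

lemma sl_succ (ψ : ℝ → ℝ) (h : ℝ) (j : ℕ) :
    sl ψ h (j+1) = (ψ ((j+1) * h) - ψ (j * h)) / h := by
  simp [sl]

lemma sl_succ_mul (ψ : ℝ → ℝ) {h : ℝ} (hh : h ≠ 0) (j : ℕ) :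
    sl ψ h (j+1) * h = ψ ((j+1) * h) - ψ (j * h) := by
  rw [sl_succ]; field_simp

lemma sl_as_slope (ψ : ℝ → ℝ) (h : ℝ) (j : ℕ) :
    sl ψ h (j+1) = (ψ ((j+1) * h) - ψ (j * h)) / ((j+1) * h - j * h) := by
  rw [sl_succ]; congr 1; ring

section A
variable {ψ : ℝ → ℝ} {h : ℝ}

lemma slA_nonneg (hmono : MonotoneOn ψ (Ici 0)) (hh : 0 < h) (j : ℕ) :
    0 ≤ sl ψ h j := by
  cases j with
  | zero => simp [sl_zero]
  | succ i =>
    rw [sl_succ]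
    apply div_nonneg _ hh.le
    have : (i:ℝ) * h ≤ (i+1) * h := by nlinarith
    have := hmono (mem_Ici.mpr (by positivity)) (mem_Ici.mpr (by positivity)) this
    linarith

lemma sl_mono_succ (hconv : ConvexOn ℝ (Ici 0) ψ) (hh : 0 < h) (i : ℕ) :
    sl ψ h (i+1) ≤ sl ψ h (i+2) := by
  rw [sl_as_slope, show (i+2:ℕ) = (i+1)+1 from rfl, sl_as_slope]
  push_cast
  exact chord_le hconv (by positivity) (by nlinarith) (by nlinarith)
    (by nlinarith) (by nlinarith)

lemma slA_mono (hconv : ConvexOn ℝ (Ici 0) ψ) (hmono : MonotoneOn ψ (Ici 0))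
    (hh : 0 < h) (j : ℕ) : sl ψ h j ≤ sl ψ h (j+1) := by
  cases j with
  | zero => rw [sl_zero]; exact slA_nonneg hmono hh 1
  | succ i => exact sl_mono_succ hconv hh i
end A
noncomputable def QQ (ψ : ℝ → ℝ) (h : ℝ) (M : ℕ) (x : ℝ) : ℝ :=
  ∑ i ∈ Finset.range M, (sl ψ h (i+1) - sl ψ h i) * max (x - (i+1)*h) 0

section QA
variable {ψ : ℝ → ℝ} {h : ℝ}

lemma QQ_succ (M : ℕ) (x : ℝ) :
    QQ ψ h (M+1) x = QQ ψ h M x + (sl ψ h (M+1) - sl ψ h M) * max (x - ((M:ℝ)+1)*h) 0 := by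
  rw [QQ, Finset.sum_range_succ]; push_cast; rfl

lemma QA_nonneg (hconv : ConvexOn ℝ (Ici 0) ψ) (hmono : MonotoneOn ψ (Ici 0))
    (hh : 0 < h) (M : ℕ) (x : ℝ) : 0 ≤ QQ ψ h M x := by
  apply Finset.sum_nonneg
  intro i _
  apply mul_nonneg _ (le_max_right _ _)
  linarith [slA_mono hconv hmono hh i]

/-- key chord bound used to step off the grid -/
lemma slA_le_chord_right (hconv : ConvexOn ℝ (Ici 0) ψ) (h0 : ψ 0 = 0)
    (hpos : ∀ x, 0 ≤ x → 0 ≤ ψ x) (hh : 0 < h) (M : ℕ) {x : ℝ}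
    (hMx : (M:ℝ)*h < x) : sl ψ h M * (x - M*h) ≤ ψ x - ψ (M*h) := by
  cases M with
  | zero =>
    simp only [sl_zero, Nat.cast_zero, zero_mul, sub_zero, h0] at hMx ⊢
    linarith [hpos x hMx.le]
  | succ i =>
    have hc : sl ψ h (i+1) ≤ (ψ x - ψ (((i:ℝ)+1)*h))/(x - ((i:ℝ)+1)*h) := by
      rw [sl_as_slope]
      push_cast
      push_cast at hMx
      exact chord_le hconv (by positivity) (by nlinarith) (by nlinarith)
        (by nlinarith) (by nlinarith)
    push_cast at hMx ⊢
    have hpos' : (0:ℝ) < x - ((i:ℝ)+1)*h := by nlinarith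
    have := (le_div_iff₀ hpos').mp hc
    linarith

lemma QA_upper (hconv : ConvexOn ℝ (Ici 0) ψ) (h0 : ψ 0 = 0)
    (hpos : ∀ x, 0 ≤ x → 0 ≤ ψ x) (hh : 0 < h) (M : ℕ) {x : ℝ} (hx : 0 ≤ x) :
    QQ ψ h M x ≤ ψ (min x ((M:ℝ)*h)) + sl ψ h M * max (x - (M:ℝ)*h) 0 := by
  have hmono := monoA hconv h0 hpos
  induction M with
  | zero => simp [QQ, sl_zero, min_eq_right hx, h0]
  | succ M ih =>
    rw [QQ_succ]
    push_cast
    rcases le_or_gt x ((M:ℝ)*h) with hc1 | hc2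
    · have e1 : max (x - ((M:ℝ)+1)*h) 0 = 0 := max_eq_right (by nlinarith)
      have e2 : max (x - (M:ℝ)*h) 0 = 0 := max_eq_right (by nlinarith)
      have e3 : min x (((M:ℝ)+1)*h) = x := min_eq_left (by nlinarith)
      have e4 : min x ((M:ℝ)*h) = x := min_eq_left (by nlinarith)
      rw [e1, e3]
      rw [e2, e4] at ih
      linarith
    · rcases le_or_gt x (((M:ℝ)+1)*h) with hc3 | hc4
      · have e1 : max (x - ((M:ℝ)+1)*h) 0 = 0 := max_eq_right (by nlinarith)
        have e2 : max (x - (M:ℝ)*h) 0 = x - (M:ℝ)*h := max_eq_left (by nlinarith)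
        have e3 : min x (((M:ℝ)+1)*h) = x := min_eq_left (by nlinarith)
        have e4 : min x ((M:ℝ)*h) = (M:ℝ)*h := min_eq_right (by nlinarith)
        rw [e1, e3]
        rw [e2, e4] at ih
        have := slA_le_chord_right hconv h0 hpos hh M hc2
        linarith
      · have e1 : max (x - ((M:ℝ)+1)*h) 0 = x - ((M:ℝ)+1)*h := max_eq_left (by nlinarith)
        have e2 : max (x - (M:ℝ)*h) 0 = x - (M:ℝ)*h := max_eq_left (by nlinarith)
        have e3 : min x (((M:ℝ)+1)*h) = ((M:ℝ)+1)*h := min_eq_right (by nlinarith)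
        have e4 : min x ((M:ℝ)*h) = (M:ℝ)*h := min_eq_right (by nlinarith)
        rw [e1, e3]
        rw [e2, e4] at ih
        have hmul : sl ψ h M * h ≤ sl ψ h (M+1) * h :=
          mul_le_mul_of_nonneg_right (slA_mono hconv hmono hh M) hh.le
        have hsm : sl ψ h (M+1) * h = ψ (((M:ℝ)+1)*h) - ψ ((M:ℝ)*h) := by
          have := sl_succ_mul ψ (ne_of_gt hh) M
          push_cast at this; linarith
        nlinarith [ih, hmul, hsm]

lemma QA_le (hconv : ConvexOn ℝ (Ici 0) ψ) (h0 : ψ 0 = 0)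
    (hpos : ∀ x, 0 ≤ x → 0 ≤ ψ x) (hh : 0 < h) (M : ℕ) {x : ℝ} (hx : 0 ≤ x) :
    QQ ψ h M x ≤ ψ x := by
  have := QA_upper hconv h0 hpos hh M hx
  rcases le_or_gt x ((M:ℝ)*h) with hc | hc
  · rwa [min_eq_left hc, max_eq_right (by linarith), mul_zero, add_zero] at this
  · rw [min_eq_right hc.le, max_eq_left (by linarith)] at this
    have := slA_le_chord_right hconv h0 hpos hh M hc
    linarith

lemma QA_lower (hconv : ConvexOn ℝ (Ici 0) ψ) (h0 : ψ 0 = 0)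
    (hpos : ∀ x, 0 ≤ x → 0 ≤ ψ x) (hh : 0 < h) (M : ℕ) {x : ℝ} (hx : 0 ≤ x) :
    ψ (min (max (x-h) 0) ((M:ℝ)*h)) + sl ψ h M * max (x - ((M:ℝ)+1)*h) 0
      ≤ QQ ψ h M x := by
  have hmono := monoA hconv h0 hpos
  set y := max (x-h) 0 with hy
  have hy0 : 0 ≤ y := le_max_right _ _
  induction M with
  | zero =>
    have e0 : min y ((0:ℕ):ℝ)*h = 0 := by norm_num [min_eq_right hy0]
    simp only [QQ, Finset.range_zero, Finset.sum_empty, sl_zero, zero_mul, add_zero,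
      Nat.cast_zero]
    rw [min_eq_right hy0, h0]
  | succ M ih =>
    rw [QQ_succ]
    push_cast
    rcases le_or_gt y ((M:ℝ)*h) with hc1 | hc2
    · have e3 : min y (((M:ℝ)+1)*h) = y := min_eq_left (by nlinarith)
      have e4 : min y ((M:ℝ)*h) = y := min_eq_left hc1
      rw [e4] at ih
      rw [e3]
      have hmax : max (x - ((M:ℝ)+2)*h) 0 ≤ max (x - ((M:ℝ)+1)*h) 0 :=
        max_le_max (by nlinarith) le_rfl
      have hsn : 0 ≤ sl ψ h (M+1) := slA_nonneg hmono hh (M+1)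
      have hm2 : sl ψ h (M+1) * max (x - ((M:ℝ)+2)*h) 0
          ≤ sl ψ h (M+1) * max (x - ((M:ℝ)+1)*h) 0 :=
        mul_le_mul_of_nonneg_left hmax hsn
      have e5 : ((M:ℝ)+1+1)*h = ((M:ℝ)+2)*h := by ring
      rw [e5]
      linarith
    · have hyx : y = x - h := by
        rcases le_or_gt (x-h) 0 with h' | h'
        · exfalso; have : y = 0 := max_eq_right h'
          have : (0:ℝ) ≤ (M:ℝ)*h := by positivity
          nlinarith
        · exact max_eq_left h'.le
      rcases le_or_gt y (((M:ℝ)+1)*h) with hc3 | hc4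
      · have e3 : min y (((M:ℝ)+1)*h) = y := min_eq_left hc3
        have e4 : min y ((M:ℝ)*h) = (M:ℝ)*h := min_eq_right hc2.le
        rw [e4] at ih
        rw [e3]
        have e1 : max (x - ((M:ℝ)+1+1)*h) 0 = 0 := max_eq_right (by nlinarith)
        have e2 : max (x - ((M:ℝ)+1)*h) 0 = y - (M:ℝ)*h := by
          have h1 : (0:ℝ) ≤ x - ((M:ℝ)+1)*h := by nlinarith
          rw [max_eq_left h1, hyx]; ring
        rw [e1, e2]
        rw [e2] at ih
        -- ψ y ≤ ψ (Mh) + sl(M+1) (y - Mh)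
        have hcrd : (ψ y - ψ ((M:ℝ)*h))/(y - (M:ℝ)*h) ≤ sl ψ h (M+1) := by
          rw [sl_as_slope]
          push_cast
          exact chord_le hconv (by positivity) hc2 (by nlinarith) le_rfl hc3
        have hpos' : (0:ℝ) < y - (M:ℝ)*h := by linarith
        have hkey := (div_le_iff₀ hpos').mp hcrd
        nlinarith [ih, hkey]
      · have e3 : min y (((M:ℝ)+1)*h) = ((M:ℝ)+1)*h := min_eq_right hc4.le
        have e4 : min y ((M:ℝ)*h) = (M:ℝ)*h := min_eq_right hc2.le
        rw [e4] at ih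
        rw [e3]
        have e1 : max (x - ((M:ℝ)+1+1)*h) 0 = y - ((M:ℝ)+1)*h := by
          have h1 : (0:ℝ) ≤ x - ((M:ℝ)+1+1)*h := by nlinarith
          rw [max_eq_left h1, hyx]; ring
        have e2 : max (x - ((M:ℝ)+1)*h) 0 = y - (M:ℝ)*h := by
          have h1 : (0:ℝ) ≤ x - ((M:ℝ)+1)*h := by nlinarith
          rw [max_eq_left h1, hyx]; ring
        rw [e1, e2]
        rw [e2] at ih
        have hsm : sl ψ h (M+1) * h = ψ (((M:ℝ)+1)*h) - ψ ((M:ℝ)*h) := by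
          have := sl_succ_mul ψ (ne_of_gt hh) M
          push_cast at this; linarith
        nlinarith [ih, hsm, mul_le_mul_of_nonneg_right (slA_mono hconv hmono hh M) (by linarith : (0:ℝ) ≤ y - (M:ℝ)*h)]
end QA
noncomputable def RR (ψ : ℝ → ℝ) (h : ℝ) (M : ℕ) (x : ℝ) : ℝ :=
  ∑ i ∈ Finset.range M, sl ψ h (i+2) * (min x (((i:ℝ)+1)*h) - min x ((i:ℝ)*h))

section RB
variable {ψ : ℝ → ℝ} {h : ℝ}

lemma RR_succ (M : ℕ) (x : ℝ) :
    RR ψ h (M+1) x = RR ψ h M x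
      + sl ψ h (M+2) * (min x (((M:ℝ)+1)*h) - min x ((M:ℝ)*h)) := by
  rw [RR, Finset.sum_range_succ]; rfl

lemma slB_nonpos (hant : AntitoneOn ψ (Ici 0)) (hh : 0 < h) (j : ℕ) :
    sl ψ h j ≤ 0 := by
  cases j with
  | zero => simp [sl_zero]
  | succ i =>
    rw [sl_succ]
    apply div_nonpos_of_nonpos_of_nonneg _ hh.le
    have hle : (i:ℝ) * h ≤ ((i:ℝ)+1) * h := by nlinarith
    have := hant (mem_Ici.mpr (by positivity)) (mem_Ici.mpr (by positivity)) hle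
    push_cast
    linarith

lemma RB_nonpos (hant : AntitoneOn ψ (Ici 0)) (hh : 0 < h) (M : ℕ) (x : ℝ) :
    RR ψ h M x ≤ 0 := by
  apply Finset.sum_nonpos
  intro i _
  apply mul_nonpos_of_nonpos_of_nonneg (slB_nonpos hant hh _)
  have : min x ((i:ℝ)*h) ≤ min x (((i:ℝ)+1)*h) := min_le_min le_rfl (by nlinarith)
  linarith

lemma RB_upper (hconv : ConvexOn ℝ (Ici 0) ψ) (h0 : ψ 0 = 0)
    (hneg : ∀ x, 0 ≤ x → ψ x ≤ 0) (hh : 0 < h) (M : ℕ) {x : ℝ} (hx : 0 ≤ x) :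
    RR ψ h M x ≤ ψ (min x (((M:ℝ)+1)*h)) - ψ h := by
  have hant := antB hconv h0 hneg
  induction M with
  | zero =>
    simp only [RR, Finset.range_zero, Finset.sum_empty, Nat.cast_zero, zero_add, one_mul]
    have hm0 : (0:ℝ) ≤ min x h := le_min hx hh.le
    have := hant (mem_Ici.mpr hm0) (mem_Ici.mpr hh.le) (min_le_right x h)
    linarith
  | succ M ih =>
    rw [RR_succ]
    push_cast
    set δ := min x (((M:ℝ)+1)*h) - min x ((M:ℝ)*h) with hδ
    have hδ0 : 0 ≤ δ := by
      have : min x ((M:ℝ)*h) ≤ min x (((M:ℝ)+1)*h) := min_le_min le_rfl (by nlinarith)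
      rw [hδ]; linarith
    rcases le_or_gt x (((M:ℝ)+1)*h) with hc | hc
    · have e1 : min x (((M:ℝ)+1)*h) = x := min_eq_left hc
      have e2 : min x (((M:ℝ)+1+1)*h) = x := min_eq_left (by nlinarith)
      rw [e2]
      rw [e1] at ih
      have := mul_nonpos_of_nonpos_of_nonneg (slB_nonpos hant hh (M+2)) hδ0
      linarith
    · have e1 : min x (((M:ℝ)+1)*h) = ((M:ℝ)+1)*h := min_eq_right hc.le
      have e2 : min x ((M:ℝ)*h) = (M:ℝ)*h := min_eq_right (by nlinarith)
      have eδ : δ = h := by rw [hδ, e1, e2]; ring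
      have hsm : sl ψ h (M+2) * h = ψ (((M:ℝ)+1+1)*h) - ψ (((M:ℝ)+1)*h) := by
        have := sl_succ_mul ψ (ne_of_gt hh) (M+1)
        push_cast at this; linarith
      have hmin2 : min x (((M:ℝ)+1+1)*h) ≤ ((M:ℝ)+1+1)*h := min_le_right _ _
      have hmin2' : (0:ℝ) ≤ min x (((M:ℝ)+1+1)*h) := le_min hx (by positivity)
      have hant2 := hant (mem_Ici.mpr hmin2') (mem_Ici.mpr (by positivity : (0:ℝ) ≤ ((M:ℝ)+1+1)*h)) hmin2
      rw [e1] at ih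
      rw [eδ, hsm]
      linarith
end RB
section RB2
variable {ψ : ℝ → ℝ} {h : ℝ}

lemma RB_lower (hconv : ConvexOn ℝ (Ici 0) ψ) (h0 : ψ 0 = 0)
    (hneg : ∀ x, 0 ≤ x → ψ x ≤ 0) (hh : 0 < h) (M : ℕ) {x : ℝ} (hx : 0 ≤ x) :
    ψ (min x ((M:ℝ)*h) + h) - ψ h ≤ RR ψ h M x := by
  induction M with
  | zero =>
    simp only [RR, Finset.range_zero, Finset.sum_empty, Nat.cast_zero, zero_mul]
    have e : min x 0 = 0 := min_eq_right hx
    rw [e, zero_add]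
    linarith
  | succ M ih =>
    rw [RR_succ]
    push_cast
    have hmin0 : (0:ℝ) ≤ min x ((M:ℝ)*h) := le_min hx (by positivity)
    have hminM : min x ((M:ℝ)*h) ≤ (M:ℝ)*h := min_le_right _ _
    have hmin1 : min x (((M:ℝ)+1)*h) ≤ ((M:ℝ)+1)*h := min_le_right _ _
    set δ := min x (((M:ℝ)+1)*h) - min x ((M:ℝ)*h) with hδ
    set a := min x ((M:ℝ)*h) + h with ha
    have hδ0 : 0 ≤ δ := by
      have : min x ((M:ℝ)*h) ≤ min x (((M:ℝ)+1)*h) := min_le_min le_rfl (by nlinarith)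
      rw [hδ]; linarith
    have hsum : min x (((M:ℝ)+1)*h) + h = a + δ := by rw [ha, hδ]; ring
    have key : ψ (a + δ) ≤ ψ a + sl ψ h (M+2) * δ := by
      rcases eq_or_lt_of_le hδ0 with heq | hlt
      · rw [← heq, add_zero, mul_zero, add_zero]
      · have hcc := chord_le hconv (by rw [ha]; linarith)
          (by linarith : a < a + δ)
          (by nlinarith : ((M:ℝ)+1)*h < ((M:ℝ)+1+1)*h)
          (by rw [ha]; nlinarith : a ≤ ((M:ℝ)+1)*h)
          (by rw [ha, hδ]; nlinarith : a + δ ≤ ((M:ℝ)+1+1)*h)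
        have e1 : a + δ - a = δ := by ring
        rw [e1] at hcc
        have e2 : (ψ (((M:ℝ)+1+1)*h) - ψ (((M:ℝ)+1)*h))/(((M:ℝ)+1+1)*h - ((M:ℝ)+1)*h)
            = sl ψ h (M+2) := by
          rw [sl_as_slope]
          push_cast
          congr 1
        have := (div_le_iff₀ hlt).mp (hcc.trans (le_of_eq e2))
        linarith
    rw [hsum]
    linarith

lemma RB_ge (hconv : ConvexOn ℝ (Ici 0) ψ) (h0 : ψ 0 = 0)
    (hneg : ∀ x, 0 ≤ x → ψ x ≤ 0) (hh : 0 < h) (M : ℕ) {x : ℝ} (hx : 0 ≤ x) :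
    ψ x ≤ RR ψ h M x := by
  have hant := antB hconv h0 hneg
  refine le_trans ?_ (RB_lower hconv h0 hneg hh M hx)
  rcases le_or_gt x ((M:ℝ)*h) with hc | hc
  · rw [min_eq_left hc]
    -- ψ x + ψ h ≤ ψ (x + h)
    have hcc := chord_le hconv (le_refl 0) hh (by linarith : x < x + h) hx (by linarith)
    rw [h0, sub_zero, sub_zero] at hcc
    have e : x + h - x = h := by ring
    rw [e] at hcc
    have h2 := mul_le_mul_of_nonneg_right hcc hh.le
    rw [div_mul_cancel₀ _ (ne_of_gt hh), div_mul_cancel₀ _ (ne_of_gt hh)] at h2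
    linarith
  · rw [min_eq_right hc.le]
    rcases le_or_gt ((M:ℝ)*h + h) x with hc2 | hc2
    · have h1 : ψ x ≤ ψ ((M:ℝ)*h + h) :=
        hant (mem_Ici.mpr (by positivity)) (mem_Ici.mpr hx) hc2
      have := hneg h hh.le
      linarith
    · have h1 : ψ x ≤ ψ ((M:ℝ)*h) :=
        hant (mem_Ici.mpr (by positivity)) (mem_Ici.mpr (by positivity)) hc.le
      -- ψ (Mh) + ψ h ≤ ψ (Mh + h)
      have hMh0 : (0:ℝ) ≤ (M:ℝ)*h := by positivity
      have hcc := chord_le hconv (le_refl 0) hh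
        (by linarith : (M:ℝ)*h < (M:ℝ)*h + h) (by positivity) (by linarith)
      rw [h0, sub_zero, sub_zero] at hcc
      have e : (M:ℝ)*h + h - (M:ℝ)*h = h := by ring
      rw [e] at hcc
      have h2 := mul_le_mul_of_nonneg_right hcc hh.le
      rw [div_mul_cancel₀ _ (ne_of_gt hh), div_mul_cancel₀ _ (ne_of_gt hh)] at h2
      linarith
end RB2
section INT
variable {α : Type*} [MeasureSpace α] {f g : α → ℝ}

lemma hinge_integrable (hf0 : ∀ r, 0 ≤ f r) (hfi : Integrable f) {t : ℝ} (ht : 0 ≤ t) :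
    Integrable (fun r => max (f r - t) 0) := by
  have hm : AEStronglyMeasurable (fun r => max (f r - t) 0) volume :=
    ((continuous_id.sub continuous_const).max continuous_const).comp_aestronglyMeasurable
      hfi.aestronglyMeasurable
  refine hfi.mono hm (ae_of_all _ fun r => ?_)
  rw [Real.norm_eq_abs, Real.norm_eq_abs, abs_of_nonneg (le_max_right _ _)]
  have h1 := hf0 r
  rw [abs_of_nonneg h1]
  exact max_le (by linarith) h1

lemma min_integrable (hf0 : ∀ r, 0 ≤ f r) (hfi : Integrable f) {t : ℝ} (ht : 0 ≤ t) :
    Integrable (fun r => min (f r) t) := by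
  have hm : AEStronglyMeasurable (fun r => min (f r) t) volume :=
    (continuous_id.min continuous_const).comp_aestronglyMeasurable hfi.aestronglyMeasurable
  refine hfi.mono hm (ae_of_all _ fun r => ?_)
  rw [Real.norm_eq_abs, Real.norm_eq_abs, abs_of_nonneg (le_min (hf0 r) ht)]
  rw [abs_of_nonneg (hf0 r)]
  exact min_le_left _ _

lemma min_eq_sub (a t : ℝ) : min a t = a - max (a - t) 0 := by
  rcases le_total a t with h | h
  · rw [min_eq_left h, max_eq_right (by linarith)]; ring
  · rw [min_eq_right h, max_eq_left (by linarith)]; ring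

lemma integral_min_le (hf0 : ∀ r, 0 ≤ f r) (hg0 : ∀ r, 0 ≤ g r)
    (hfi : Integrable f) (hgi : Integrable g)
    (hmass : ∫ r, f r = ∫ r, g r)
    (hmaj : ∀ t : ℝ, 0 ≤ t → ∫ r, max (g r - t) 0 ≤ ∫ r, max (f r - t) 0)
    {t : ℝ} (ht : 0 ≤ t) :
    ∫ r, min (f r) t ≤ ∫ r, min (g r) t := by
  have e1 : ∫ r, min (f r) t = (∫ r, f r) - ∫ r, max (f r - t) 0 := by
    rw [← integral_sub hfi (hinge_integrable hf0 hfi ht)]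
    simp_rw [← min_eq_sub]
  have e2 : ∫ r, min (g r) t = (∫ r, g r) - ∫ r, max (g r - t) 0 := by
    rw [← integral_sub hgi (hinge_integrable hg0 hgi ht)]
    simp_rw [← min_eq_sub]
  rw [e1, e2, hmass]
  linarith [hmaj t ht]

lemma integral_QQ (ψ : ℝ → ℝ) {h : ℝ} (hh : 0 < h) (M : ℕ)
    (hu0 : ∀ r, 0 ≤ f r) (hui : Integrable f) :
    ∫ r, QQ ψ h M (f r)
      = ∑ i ∈ Finset.range M, (sl ψ h (i+1) - sl ψ h i) * ∫ r, max (f r - ((i:ℝ)+1)*h) 0 := by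
  have : ∀ r, QQ ψ h M (f r)
      = ∑ i ∈ Finset.range M, (sl ψ h (i+1) - sl ψ h i) * max (f r - ((i:ℝ)+1)*h) 0 := by
    intro r; rw [QQ]
  simp_rw [this]
  rw [integral_finset_sum]
  · exact Finset.sum_congr rfl fun i _ => integral_const_mul _ _
  · intro i _
    exact (hinge_integrable hu0 hui (by positivity)).const_mul _

lemma integral_RR (ψ : ℝ → ℝ) {h : ℝ} (hh : 0 < h) (M : ℕ)
    (hu0 : ∀ r, 0 ≤ f r) (hui : Integrable f) :
    ∫ r, RR ψ h M (f r)
      = ∑ i ∈ Finset.range M, sl ψ h (i+2) *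
          ((∫ r, min (f r) (((i:ℝ)+1)*h)) - ∫ r, min (f r) ((i:ℝ)*h)) := by
  have : ∀ r, RR ψ h M (f r)
      = ∑ i ∈ Finset.range M, sl ψ h (i+2) * (min (f r) (((i:ℝ)+1)*h) - min (f r) ((i:ℝ)*h)) := by
    intro r; rw [RR]
  simp_rw [this]
  rw [integral_finset_sum]
  · refine Finset.sum_congr rfl fun i _ => ?_
    rw [integral_const_mul]
    congr 1
    exact integral_sub (min_integrable hu0 hui (by positivity)) (min_integrable hu0 hui (by positivity))
  · intro i _
    exact (((min_integrable hu0 hui (by positivity)).sub (min_integrable hu0 hui (by positivity))).const_mul _)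

lemma intQ_le {ψ : ℝ → ℝ} {h : ℝ} (hconv : ConvexOn ℝ (Ici 0) ψ) (h0 : ψ 0 = 0)
    (hpos : ∀ x, 0 ≤ x → 0 ≤ ψ x) (hh : 0 < h) (M : ℕ)
    (hf0 : ∀ r, 0 ≤ f r) (hg0 : ∀ r, 0 ≤ g r)
    (hfi : Integrable f) (hgi : Integrable g)
    (hmaj : ∀ t : ℝ, 0 ≤ t → ∫ r, max (g r - t) 0 ≤ ∫ r, max (f r - t) 0) :
    ∫ r, QQ ψ h M (g r) ≤ ∫ r, QQ ψ h M (f r) := by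
  rw [integral_QQ ψ hh M hf0 hfi, integral_QQ ψ hh M hg0 hgi]
  apply Finset.sum_le_sum
  intro i _
  have hc : 0 ≤ sl ψ h (i+1) - sl ψ h i := by
    linarith [slA_mono hconv (monoA hconv h0 hpos) hh i]
  exact mul_le_mul_of_nonneg_left (hmaj _ (by positivity)) hc

lemma abel_nonneg (s B : ℕ → ℝ) (hs : ∀ i, s (i+1) ≤ s (i+2)) (hsneg : ∀ i, s i ≤ 0)
    (hB : ∀ i, B i ≤ 0) (hB0 : B 0 = 0) (M : ℕ) :
    0 ≤ ∑ i ∈ Finset.range M, s (i+2) * (B (i+1) - B i) := by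
  have key : ∀ N, s (N+1) * B N ≤ ∑ i ∈ Finset.range N, s (i+2) * (B (i+1) - B i) := by
    intro N
    induction N with
    | zero => simp [hB0]
    | succ N ih =>
      rw [Finset.sum_range_succ]
      nlinarith [hs N, hB N, ih]
  calc (0:ℝ) ≤ s (M+1) * B M := by nlinarith [hsneg (M+1), hB M]
    _ ≤ _ := key M

lemma intR_le {ψ : ℝ → ℝ} {h : ℝ} (hconv : ConvexOn ℝ (Ici 0) ψ) (h0 : ψ 0 = 0)
    (hneg : ∀ x, 0 ≤ x → ψ x ≤ 0) (hh : 0 < h) (M : ℕ)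
    (hf0 : ∀ r, 0 ≤ f r) (hg0 : ∀ r, 0 ≤ g r)
    (hfi : Integrable f) (hgi : Integrable g)
    (hmass : ∫ r, f r = ∫ r, g r)
    (hmaj : ∀ t : ℝ, 0 ≤ t → ∫ r, max (g r - t) 0 ≤ ∫ r, max (f r - t) 0) :
    ∫ r, RR ψ h M (g r) ≤ ∫ r, RR ψ h M (f r) := by
  rw [integral_RR ψ hh M hf0 hfi, integral_RR ψ hh M hg0 hgi]
  set B : ℕ → ℝ := fun i => (∫ r, min (f r) ((i:ℝ)*h)) - ∫ r, min (g r) ((i:ℝ)*h) with hBdef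
  have hB : ∀ i, B i ≤ 0 := by
    intro i
    have := integral_min_le hf0 hg0 hfi hgi hmass hmaj (t := (i:ℝ)*h) (by positivity)
    rw [hBdef]; simpa using by linarith
  have hB0 : B 0 = 0 := by
    have e : ∀ u : α → ℝ, (∀ r, 0 ≤ u r) → ∫ r, min (u r) (((0:ℕ):ℝ)*h) = 0 := by
      intro u hu
      have : ∀ r, min (u r) (((0:ℕ):ℝ)*h) = 0 := by
        intro r; simp [min_eq_right (hu r)]
      simp_rw [this]; simp
    rw [hBdef]; simp only []
    rw [e f hf0, e g hg0]; ring
  have hdiff : ∑ i ∈ Finset.range M, sl ψ h (i+2) *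
          ((∫ r, min (f r) (((i:ℝ)+1)*h)) - ∫ r, min (f r) ((i:ℝ)*h))
      - ∑ i ∈ Finset.range M, sl ψ h (i+2) *
          ((∫ r, min (g r) (((i:ℝ)+1)*h)) - ∫ r, min (g r) ((i:ℝ)*h))
      = ∑ i ∈ Finset.range M, sl ψ h (i+2) * (B (i+1) - B i) := by
    rw [← Finset.sum_sub_distrib]
    refine Finset.sum_congr rfl fun i _ => ?_
    rw [hBdef]; push_cast; ring
  have := abel_nonneg (sl ψ h) B (fun i => sl_mono_succ hconv hh i)
    (fun i => slB_nonpos (antB hconv h0 hneg) hh i) hB hB0 M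
  linarith [hdiff ▸ this]
end INT
section CONV
variable {ψ : ℝ → ℝ} {h : ℝ}

lemma QA_lower' (hconv : ConvexOn ℝ (Ici 0) ψ) (h0 : ψ 0 = 0)
    (hpos : ∀ x, 0 ≤ x → 0 ≤ ψ x) (hh : 0 < h) (M : ℕ) {x : ℝ} (hx : 0 ≤ x)
    (hxM : x ≤ (M:ℝ)*h) : ψ (max (x-h) 0) ≤ QQ ψ h M x := by
  have key := QA_lower hconv h0 hpos hh M hx
  have e1 : min (max (x-h) 0) ((M:ℝ)*h) = max (x-h) 0 :=
    min_eq_left (max_le (by linarith) (by linarith))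
  have e2 : max (x - ((M:ℝ)+1)*h) 0 = 0 := max_eq_right (by nlinarith)
  rw [e1, e2, mul_zero, add_zero] at key
  exact key

lemma RB_upper' (hconv : ConvexOn ℝ (Ici 0) ψ) (h0 : ψ 0 = 0)
    (hneg : ∀ x, 0 ≤ x → ψ x ≤ 0) (hh : 0 < h) (M : ℕ) {x : ℝ} (hx : 0 ≤ x)
    (hxM : x ≤ ((M:ℝ)+1)*h) : RR ψ h M x ≤ ψ x - ψ h := by
  have key := RB_upper hconv h0 hneg hh M hx
  rw [min_eq_left hxM] at key
  exact key

lemma cast_Mk (k : ℕ) : (((k+1)*(k+1) : ℕ) : ℝ) * (1/((k:ℝ)+1)) = (k:ℝ)+1 := by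
  have h1 : ((k:ℝ)+1) ≠ 0 := by positivity
  push_cast
  field_simp

lemma tendQ (hcont : ContinuousOn ψ (Ici 0)) (hconv : ConvexOn ℝ (Ici 0) ψ)
    (h0 : ψ 0 = 0) (hpos : ∀ x, 0 ≤ x → 0 ≤ ψ x) {x : ℝ} (hx : 0 ≤ x) :
    Tendsto (fun k : ℕ => QQ ψ (1/((k:ℝ)+1)) ((k+1)*(k+1)) x) atTop (𝓝 (ψ x)) := by
  have t0 : Tendsto (fun k : ℕ => 1/((k:ℝ)+1)) atTop (𝓝 0) :=
    tendsto_one_div_add_atTop_nhds_zero_nat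
  have h1 : Tendsto (fun k : ℕ => max (x - 1/((k:ℝ)+1)) 0) atTop (𝓝 x) := by
    have ha : Tendsto (fun k : ℕ => x - 1/((k:ℝ)+1)) atTop (𝓝 (x - 0)) :=
      (tendsto_const_nhds (x := x)).sub t0
    have hb := ha.max (tendsto_const_nhds (x := (0:ℝ)))
    rw [sub_zero, max_eq_left hx] at hb
    exact hb
  have h2 : Tendsto (fun k : ℕ => ψ (max (x - 1/((k:ℝ)+1)) 0)) atTop (𝓝 (ψ x)) := by
    refine ((hcont x (mem_Ici.mpr hx)).tendsto).comp ?_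
    exact tendsto_nhdsWithin_of_tendsto_nhds_of_eventually_within _ h1
      (Eventually.of_forall fun k => mem_Ici.mpr (le_max_right _ _))
  have hup : ∀ k : ℕ, QQ ψ (1/((k:ℝ)+1)) ((k+1)*(k+1)) x ≤ ψ x := fun k =>
    QA_le hconv h0 hpos (by positivity) _ hx
  have hlow : ∀ᶠ k : ℕ in atTop, ψ (max (x - 1/((k:ℝ)+1)) 0)
      ≤ QQ ψ (1/((k:ℝ)+1)) ((k+1)*(k+1)) x := by
    filter_upwards [eventually_ge_atTop ⌈x⌉₊] with k hk'
    have hxk : x ≤ (k:ℝ)+1 := by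
      have hle := Nat.le_ceil x
      have h2 : ((⌈x⌉₊:ℕ):ℝ) ≤ (k:ℝ) := Nat.cast_le.mpr hk'
      linarith
    refine QA_lower' hconv h0 hpos (by positivity) _ hx ?_
    rw [cast_Mk k]
    exact hxk
  exact tendsto_of_tendsto_of_tendsto_of_le_of_le' h2 tendsto_const_nhds hlow
    (Eventually.of_forall hup)

lemma tendR (hcont : ContinuousOn ψ (Ici 0)) (hconv : ConvexOn ℝ (Ici 0) ψ)
    (h0 : ψ 0 = 0) (hneg : ∀ x, 0 ≤ x → ψ x ≤ 0) {x : ℝ} (hx : 0 ≤ x) :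
    Tendsto (fun k : ℕ => RR ψ (1/((k:ℝ)+1)) ((k+1)*(k+1)) x) atTop (𝓝 (ψ x)) := by
  have t0 : Tendsto (fun k : ℕ => 1/((k:ℝ)+1)) atTop (𝓝 0) :=
    tendsto_one_div_add_atTop_nhds_zero_nat
  have h2 : Tendsto (fun k : ℕ => ψ x - ψ (1/((k:ℝ)+1))) atTop (𝓝 (ψ x)) := by
    have hψ0 : Tendsto (fun k : ℕ => ψ (1/((k:ℝ)+1))) atTop (𝓝 (ψ 0)) := by
      refine ((hcont 0 (mem_Ici.mpr (le_refl 0))).tendsto).comp ?_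
      exact tendsto_nhdsWithin_of_tendsto_nhds_of_eventually_within _ t0
        (Eventually.of_forall fun k => by simp only [mem_Ici]; positivity)
    have := (tendsto_const_nhds (x := ψ x)).sub hψ0
    rw [h0, sub_zero] at this
    exact this
  have hlow : ∀ k : ℕ, ψ x ≤ RR ψ (1/((k:ℝ)+1)) ((k+1)*(k+1)) x := fun k =>
    RB_ge hconv h0 hneg (by positivity) _ hx
  have hup : ∀ᶠ k : ℕ in atTop, RR ψ (1/((k:ℝ)+1)) ((k+1)*(k+1)) x
      ≤ ψ x - ψ (1/((k:ℝ)+1)) := by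
    filter_upwards [eventually_ge_atTop ⌈x⌉₊] with k hk'
    have hxk : x ≤ (k:ℝ)+1 := by
      have hle := Nat.le_ceil x
      have h2 : ((⌈x⌉₊:ℕ):ℝ) ≤ (k:ℝ) := Nat.cast_le.mpr hk'
      linarith
    refine RB_upper' hconv h0 hneg (by positivity) _ hx ?_
    have e := cast_Mk k
    nlinarith [e, (by positivity : (0:ℝ) < 1/((k:ℝ)+1))]
  exact tendsto_of_tendsto_of_tendsto_of_le_of_le' tendsto_const_nhds h2
    (Eventually.of_forall hlow) hup
end CONV
section LEMAB
variable {α : Type*} [MeasureSpace α] {f g : α → ℝ} {ψ : ℝ → ℝ}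

lemma lemA (hf0 : ∀ r, 0 ≤ f r) (hg0 : ∀ r, 0 ≤ g r)
    (hfi : Integrable f) (hgi : Integrable g)
    (hmaj : ∀ t : ℝ, 0 ≤ t → ∫ r, max (g r - t) 0 ≤ ∫ r, max (f r - t) 0)
    (hcont : ContinuousOn ψ (Ici 0)) (hconv : ConvexOn ℝ (Ici 0) ψ)
    (h0 : ψ 0 = 0) (hpos : ∀ x, 0 ≤ x → 0 ≤ ψ x)
    (hψf : Integrable (fun r => ψ (f r))) (hψg : Integrable (fun r => ψ (g r))) :
    ∫ r, ψ (g r) ≤ ∫ r, ψ (f r) := by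
  have hmono := monoA hconv h0 hpos
  have hQc : ∀ (h' : ℝ) (M : ℕ), Continuous (fun x => QQ ψ h' M x) := by
    intro h' M
    apply continuous_finset_sum
    intro i _
    exact continuous_const.mul ((continuous_id.sub continuous_const).max continuous_const)
  have tendInt : ∀ (u : α → ℝ), (∀ r, 0 ≤ u r) → Integrable u →
      Integrable (fun r => ψ (u r)) →
      Tendsto (fun k : ℕ => ∫ r, QQ ψ (1/((k:ℝ)+1)) ((k+1)*(k+1)) (u r)) atTop
        (𝓝 (∫ r, ψ (u r))) := by
    intro u hu0 hui hψu
    apply tendsto_integral_of_dominated_convergence (bound := fun r => ψ (u r))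
    · intro k; exact (hQc _ _).comp_aestronglyMeasurable hui.aestronglyMeasurable
    · exact hψu
    · intro k
      apply ae_of_all
      intro r
      rw [Real.norm_eq_abs, abs_of_nonneg (QA_nonneg hconv hmono (by positivity) _ _)]
      exact QA_le hconv h0 hpos (by positivity) _ (hu0 r)
    · exact ae_of_all _ fun r => tendQ hcont hconv h0 hpos (hu0 r)
  refine le_of_tendsto_of_tendsto' (tendInt g hg0 hgi hψg) (tendInt f hf0 hfi hψf) fun k =>
    intQ_le hconv h0 hpos (by positivity) _ hf0 hg0 hfi hgi hmaj

lemma lemB (hf0 : ∀ r, 0 ≤ f r) (hg0 : ∀ r, 0 ≤ g r)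
    (hfi : Integrable f) (hgi : Integrable g)
    (hmass : ∫ r, f r = ∫ r, g r)
    (hmaj : ∀ t : ℝ, 0 ≤ t → ∫ r, max (g r - t) 0 ≤ ∫ r, max (f r - t) 0)
    (hcont : ContinuousOn ψ (Ici 0)) (hconv : ConvexOn ℝ (Ici 0) ψ)
    (h0 : ψ 0 = 0) (hneg : ∀ x, 0 ≤ x → ψ x ≤ 0)
    (hψf : Integrable (fun r => ψ (f r))) (hψg : Integrable (fun r => ψ (g r))) :
    ∫ r, ψ (g r) ≤ ∫ r, ψ (f r) := by
  have hant := antB hconv h0 hneg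
  have hRc : ∀ (h' : ℝ) (M : ℕ), Continuous (fun x => RR ψ h' M x) := by
    intro h' M
    apply continuous_finset_sum
    intro i _
    exact continuous_const.mul ((continuous_id.min continuous_const).sub
      (continuous_id.min continuous_const))
  have tendInt : ∀ (u : α → ℝ), (∀ r, 0 ≤ u r) → Integrable u →
      Integrable (fun r => ψ (u r)) →
      Tendsto (fun k : ℕ => ∫ r, RR ψ (1/((k:ℝ)+1)) ((k+1)*(k+1)) (u r)) atTop
        (𝓝 (∫ r, ψ (u r))) := by
    intro u hu0 hui hψu
    apply tendsto_integral_of_dominated_convergence (bound := fun r => -ψ (u r))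
    · intro k; exact (hRc _ _).comp_aestronglyMeasurable hui.aestronglyMeasurable
    · exact hψu.neg
    · intro k
      apply ae_of_all
      intro r
      rw [Real.norm_eq_abs, abs_of_nonpos (RB_nonpos hant (by positivity) _ _)]
      have := RB_ge hconv h0 hneg (by positivity : (0:ℝ) < 1/((k:ℝ)+1)) ((k+1)*(k+1)) (hu0 r)
      linarith
    · exact ae_of_all _ fun r => tendR hcont hconv h0 hneg (hu0 r)
  refine le_of_tendsto_of_tendsto' (tendInt g hg0 hgi hψg) (tendInt f hf0 hfi hψf) fun k =>
    intR_le hconv h0 hneg (by positivity) _ hf0 hg0 hfi hgi hmass hmaj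
end LEMAB
/-- If `f` continuously majorizes `g` (probability densities on ℝⁿ), then
`∫ φ ∘ f ≥ ∫ φ ∘ g` for every continuous convex `φ : ℝ₊ → ℝ` with `φ 0 = 0`
(when the integrals exist). -/
theorem continuous_majorization_implies_convex_integral_ineq
    (n : ℕ) (f g : (Fin n → ℝ) → ℝ)
    (hf_nonneg : ∀ r, 0 ≤ f r) (hg_nonneg : ∀ r, 0 ≤ g r)
    (hf_int : Integrable f) (hg_int : Integrable g)
    (hf_prob : ∫ r, f r = 1) (hg_prob : ∫ r, g r = 1)
    (hmaj : ∀ t : ℝ, 0 ≤ t →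
      ∫ r, max (g r - t) 0 ≤ ∫ r, max (f r - t) 0)
    (φ : ℝ → ℝ)
    (hφ_cont : ContinuousOn φ (Ici 0))
    (hφ_conv : ConvexOn ℝ (Ici 0) φ)
    (hφ0 : φ 0 = 0)
    (hφf_int : Integrable (fun r => φ (f r)))
    (hφg_int : Integrable (fun r => φ (g r))) :
    ∫ r, φ (g r) ≤ ∫ r, φ (f r) := by
  have hmass : ∫ r, f r = ∫ r, g r := by rw [hf_prob, hg_prob]
  by_cases hdec : ∀ x y : ℝ, 0 ≤ x → x ≤ y → φ y ≤ φ x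
  · have hneg : ∀ x, 0 ≤ x → φ x ≤ 0 := fun x hx => by
      have := hdec 0 x le_rfl hx; rwa [hφ0] at this
    exact lemB hf_nonneg hg_nonneg hf_int hg_int hmass hmaj hφ_cont hφ_conv hφ0 hneg
      hφf_int hφg_int
  · push_neg at hdec
    obtain ⟨a, b, ha, hab, hlt⟩ := hdec
    have hb0 : (0:ℝ) ≤ b := ha.trans hab
    have hne : (Icc (0:ℝ) b).Nonempty := ⟨0, le_rfl, hb0⟩
    obtain ⟨x₀, hx₀mem, hx₀min⟩ :=
      isCompact_Icc.exists_isMinOn hne (hφ_cont.mono Icc_subset_Ici_self)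
    have hx₀0 : 0 ≤ x₀ := hx₀mem.1
    have hglob : ∀ z, 0 ≤ z → φ x₀ ≤ φ z := by
      intro z hz
      rcases le_or_gt z b with hzb | hzb
      · exact isMinOn_iff.mp hx₀min z ⟨hz, hzb⟩
      · have hab' : a < b := lt_of_le_of_ne hab (fun he => by rw [he] at hlt; exact lt_irrefl _ hlt)
        have hcc := chord_le hφ_conv ha hab' hzb hab hzb.le
        have h1 : 0 < (φ b - φ a)/(b - a) := div_pos (by linarith) (by linarith)
        have h3 : 0 < (φ z - φ b)/(z - b) := lt_of_lt_of_le h1 hcc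
        have h4 := mul_pos h3 (by linarith : (0:ℝ) < z - b)
        rw [div_mul_cancel₀ _ (by linarith : z - b ≠ 0)] at h4
        have h5 : φ x₀ ≤ φ b := isMinOn_iff.mp hx₀min b ⟨hb0, le_rfl⟩
        linarith
    by_cases hcase : x₀ = 0
    · have hpos : ∀ x, 0 ≤ x → 0 ≤ φ x := fun x hx => by
        have := hglob x hx; rw [hcase, hφ0] at this; linarith
      exact lemA hf_nonneg hg_nonneg hf_int hg_int hmaj hφ_cont hφ_conv hφ0 hpos
        hφf_int hφg_int
    have hx₀pos : 0 < x₀ := lt_of_le_of_ne hx₀0 (Ne.symm hcase)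
    set c := φ x₀ with hc
    set ψ₁ : ℝ → ℝ := fun x => φ (min x x₀) with hψ₁
    set ψ₂ : ℝ → ℝ := fun x => φ (max x x₀) - c with hψ₂
    -- monotone beyond x₀, antitone before
    have hmono2 : ∀ x y, x₀ ≤ x → x ≤ y → φ x ≤ φ y := by
      intro x y hx hxy
      have hy0 : (0:ℝ) ≤ y := hx₀0.trans (hx.trans hxy)
      have hseg : x ∈ segment ℝ x₀ y := by
        rw [segment_eq_Icc (hx.trans hxy)]; exact ⟨hx, hxy⟩
      have := hφ_conv.le_on_segment (mem_Ici.mpr hx₀0) (mem_Ici.mpr hy0) hseg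
      have h5 : φ x₀ ≤ φ y := hglob y hy0
      rw [max_eq_right h5] at this
      exact this
    have hant1 : ∀ x y, 0 ≤ x → x ≤ y → y ≤ x₀ → φ y ≤ φ x := by
      intro x y hx hxy hy
      have hseg : y ∈ segment ℝ x x₀ := by
        rw [segment_eq_Icc (hxy.trans hy)]; exact ⟨hxy, hy⟩
      have := hφ_conv.le_on_segment (mem_Ici.mpr hx) (mem_Ici.mpr hx₀0) hseg
      have h5 : φ x₀ ≤ φ x := hglob x hx
      rw [max_eq_left h5] at this
      exact this
    -- ψ₁ properties
    have h10 : ψ₁ 0 = 0 := by simp only [hψ₁]; rw [min_eq_left hx₀0, hφ0]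
    have h1neg : ∀ x, 0 ≤ x → ψ₁ x ≤ 0 := by
      intro x hx
      have := hant1 0 (min x x₀) le_rfl (le_min hx hx₀0) (min_le_right _ _)
      rw [hφ0] at this
      exact this
    have h1conv : ConvexOn ℝ (Ici 0) ψ₁ := by
      refine ⟨convex_Ici 0, ?_⟩
      intro x hx y hy p q hp hq hpq
      simp only [smul_eq_mul, hψ₁]
      set m := p * min x x₀ + q * min y x₀ with hm
      have hm0 : 0 ≤ m := by
        apply add_nonneg <;> apply mul_nonneg <;>
          first | assumption | exact le_min (by assumption) hx₀0
      have hmle : m ≤ min (p*x + q*y) x₀ := by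
        apply le_min
        · apply add_le_add <;> apply mul_le_mul_of_nonneg_left (min_le_left _ _) <;> assumption
        · calc m ≤ p * x₀ + q * x₀ := by
                apply add_le_add <;> apply mul_le_mul_of_nonneg_left (min_le_right _ _) <;> assumption
            _ = x₀ := by rw [← add_mul, hpq, one_mul]
      have step1 : φ (min (p*x + q*y) x₀) ≤ φ m :=
        hant1 m _ hm0 hmle (min_le_right _ _)
      have step2 : φ m ≤ p * φ (min x x₀) + q * φ (min y x₀) := by
        have := hφ_conv.2 (mem_Ici.mpr (le_min hx hx₀0)) (mem_Ici.mpr (le_min hy hx₀0)) hp hq hpq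
        simpa using this
      exact step1.trans step2
    have h1cont : ContinuousOn ψ₁ (Ici 0) := by
      apply hφ_cont.comp ((continuous_id.min continuous_const).continuousOn)
      intro x hx
      exact mem_Ici.mpr (le_min hx hx₀0)
    -- ψ₂ properties
    have h20 : ψ₂ 0 = 0 := by simp only [hψ₂]; rw [max_eq_right hx₀0]; ring
    have h2pos : ∀ x, 0 ≤ x → 0 ≤ ψ₂ x := by
      intro x hx
      have := hglob (max x x₀) (hx₀0.trans (le_max_right _ _))
      simp only [hψ₂]
      linarith
    have h2conv : ConvexOn ℝ (Ici 0) ψ₂ := by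
      refine ⟨convex_Ici 0, ?_⟩
      intro x hx y hy p q hp hq hpq
      simp only [smul_eq_mul, hψ₂]
      set m := p * max x x₀ + q * max y x₀ with hm
      have hmge : max (p*x + q*y) x₀ ≤ m := by
        apply max_le
        · apply add_le_add <;> apply mul_le_mul_of_nonneg_left (le_max_left _ _) <;> assumption
        · calc x₀ = p * x₀ + q * x₀ := by rw [← add_mul, hpq, one_mul]
            _ ≤ m := by
                apply add_le_add <;> apply mul_le_mul_of_nonneg_left (le_max_right _ _) <;> assumption
      have step1 : φ (max (p*x + q*y) x₀) ≤ φ m :=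
        hmono2 _ m (le_max_right _ _) hmge
      have step2 : φ m ≤ p * φ (max x x₀) + q * φ (max y x₀) := by
        have := hφ_conv.2 (mem_Ici.mpr (hx₀0.trans (le_max_right x x₀)))
          (mem_Ici.mpr (hx₀0.trans (le_max_right y x₀))) hp hq hpq
        simpa using this
      have : p * (φ (max x x₀) - c) + q * (φ (max y x₀) - c)
          = p * φ (max x x₀) + q * φ (max y x₀) - c := by
        have : p * c + q * c = c := by rw [← add_mul, hpq, one_mul]
        ring_nf
        ring_nf at this
        linarith
      linarith
    have h2cont : ContinuousOn ψ₂ (Ici 0) := by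
      apply ContinuousOn.sub _ continuousOn_const
      apply hφ_cont.comp ((continuous_id.max continuous_const).continuousOn)
      intro x hx
      exact mem_Ici.mpr (hx₀0.trans (le_max_right _ _))
    -- sum identity
    have hsum : ∀ x, 0 ≤ x → φ x = ψ₁ x + ψ₂ x := by
      intro x hx
      simp only [hψ₁, hψ₂]
      rcases le_total x x₀ with hle | hle
      · rw [min_eq_left hle, max_eq_right hle]; ring
      · rw [min_eq_right hle, max_eq_left hle]; ring
    have hGcont : Continuous (fun x : ℝ => φ (max x x₀)) := by
      rw [continuous_iff_continuousAt]
      intro x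
      have hmx : 0 < max x x₀ := lt_of_lt_of_le hx₀pos (le_max_right _ _)
      have hφat : ContinuousAt φ (max x x₀) :=
        hφ_cont.continuousAt (Ici_mem_nhds hmx)
      exact ContinuousAt.comp (g := φ) (f := fun x : ℝ => max x x₀) (x := x) hφat
        ((continuous_id.max continuous_const).continuousAt)
    have h2int : ∀ (u : (Fin n → ℝ) → ℝ), (∀ r, 0 ≤ u r) → Integrable u →
        Integrable (fun r => φ (u r)) → Integrable (fun r => ψ₂ (u r)) := by
      intro u hu0 hui hφu
      have hmeas : AEStronglyMeasurable (fun r => ψ₂ (u r)) volume := by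
        have he : (fun r => ψ₂ (u r)) = (fun x => φ (max x x₀) - c) ∘ u := rfl
        rw [he]
        exact (hGcont.sub continuous_const).comp_aestronglyMeasurable hui.aestronglyMeasurable
      refine Integrable.mono' (g := fun r => |φ (u r)| + (|c|/x₀) * u r) ?_ hmeas (ae_of_all _ ?_)
      · exact hφu.abs.add (hui.const_mul _)
      · intro r
        rw [Real.norm_eq_abs, abs_of_nonneg (h2pos _ (hu0 r))]
        simp only [hψ₂]
        rcases le_total (u r) x₀ with hle | hle
        · rw [max_eq_right hle]
          have e1 : φ x₀ - c = 0 := by rw [hc, sub_self]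
          have e2 : (0:ℝ) ≤ |c|/x₀ * u r := mul_nonneg (by positivity) (hu0 r)
          have e3 := abs_nonneg (φ (u r))
          linarith
        · rw [max_eq_left hle]
          have h1 : |c| ≤ |c|/x₀ * u r := by
            rw [div_mul_eq_mul_div, le_div_iff₀ hx₀pos]
            nlinarith [abs_nonneg c]
          have e4 := le_abs_self (φ (u r))
          have e5 := neg_abs_le c
          linarith
    have h2f := h2int f hf_nonneg hf_int hφf_int
    have h2g := h2int g hg_nonneg hg_int hφg_int
    have h1f : Integrable (fun r => ψ₁ (f r)) := by
      have he : (fun r => ψ₁ (f r)) = fun r => φ (f r) - ψ₂ (f r) :=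
        funext fun r => by have := hsum (f r) (hf_nonneg r); linarith
      rw [he]; exact hφf_int.sub h2f
    have h1g : Integrable (fun r => ψ₁ (g r)) := by
      have he : (fun r => ψ₁ (g r)) = fun r => φ (g r) - ψ₂ (g r) :=
        funext fun r => by have := hsum (g r) (hg_nonneg r); linarith
      rw [he]; exact hφg_int.sub h2g
    have eqf : ∫ r, φ (f r) = (∫ r, ψ₁ (f r)) + ∫ r, ψ₂ (f r) := by
      rw [← integral_add h1f h2f]
      congr 1; funext r; exact hsum (f r) (hf_nonneg r)
    have eqg : ∫ r, φ (g r) = (∫ r, ψ₁ (g r)) + ∫ r, ψ₂ (g r) := by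
      rw [← integral_add h1g h2g]
      congr 1; funext r; exact hsum (g r) (hg_nonneg r)
    have i1 := lemB hf_nonneg hg_nonneg hf_int hg_int hmass hmaj h1cont h1conv h10 h1neg h1f h1g
    have i2 := lemA hf_nonneg hg_nonneg hf_int hg_int hmaj h2cont h2conv h20 h2pos h2f h2g
    rw [eqf, eqg]
    linarith
end

section
/- Let f₁, f₂, g₁, g₂ be nonnegative integrable functions on a domain A such that f₁ and f₂ have disjoint supports, and g₁ and g₂ have disjoint supports. If f₁ ≻ g₁ and f₂ ≻ g₂, then f₁ + f₂ ≻ g₁ + g₂. -/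
open MeasureTheory Set

lemma max_sub_integrable {A : Type*} [MeasureSpace A] (f : A → ℝ)
    (hnn : ∀ r, 0 ≤ f r) (hint : Integrable f) (t : ℝ) (ht : 0 ≤ t) :
    Integrable (fun r => max (f r - t) 0) := by
  refine hint.mono ?_ ?_
  · exact (hint.aestronglyMeasurable.sub aestronglyMeasurable_const).sup
      aestronglyMeasurable_const
  · filter_upwards with r
    rw [Real.norm_eq_abs, Real.norm_eq_abs, abs_of_nonneg (le_max_right _ _),
      abs_of_nonneg (hnn r)]
    exact max_le (by linarith [hnn r]) (hnn r)

/-- If `f₁ ≻ g₁` and `f₂ ≻ g₂`, with `f₁, f₂` having disjoint supports and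
`g₁, g₂` having disjoint supports, then `f₁ + f₂ ≻ g₁ + g₂`. -/
theorem majorization_add_of_disjoint_supports
    {A : Type*} [MeasureSpace A] (f₁ f₂ g₁ g₂ : A → ℝ)
    (hf₁_nonneg : ∀ r, 0 ≤ f₁ r) (hf₂_nonneg : ∀ r, 0 ≤ f₂ r)
    (hg₁_nonneg : ∀ r, 0 ≤ g₁ r) (hg₂_nonneg : ∀ r, 0 ≤ g₂ r)
    (hf₁_int : Integrable f₁) (hf₂_int : Integrable f₂)
    (hg₁_int : Integrable g₁) (hg₂_int : Integrable g₂)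
    (hf_disj : ∀ r, f₁ r = 0 ∨ f₂ r = 0)
    (hg_disj : ∀ r, g₁ r = 0 ∨ g₂ r = 0)
    (hmaj₁ : (∀ t : ℝ, 0 ≤ t → ∫ r, max (g₁ r - t) 0 ≤ ∫ r, max (f₁ r - t) 0) ∧
      ∫ r, g₁ r = ∫ r, f₁ r)
    (hmaj₂ : (∀ t : ℝ, 0 ≤ t → ∫ r, max (g₂ r - t) 0 ≤ ∫ r, max (f₂ r - t) 0) ∧
      ∫ r, g₂ r = ∫ r, f₂ r) :
    (∀ t : ℝ, 0 ≤ t →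
      ∫ r, max (g₁ r + g₂ r - t) 0 ≤ ∫ r, max (f₁ r + f₂ r - t) 0) ∧
    ∫ r, (g₁ r + g₂ r) = ∫ r, (f₁ r + f₂ r) := by
  have key : ∀ (u v : A → ℝ), (∀ r, 0 ≤ u r) → (∀ r, 0 ≤ v r) →
      (∀ r, u r = 0 ∨ v r = 0) → ∀ t : ℝ, 0 ≤ t → ∀ r,
      max (u r + v r - t) 0 = max (u r - t) 0 + max (v r - t) 0 := by
    intro u v hu hv hd t ht r
    rcases hd r with h | h <;> rw [h] <;> simp [max_eq_right (by linarith : -t ≤ (0:ℝ))]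
  constructor
  · intro t ht
    have e1 : ∀ r, max (g₁ r + g₂ r - t) 0 = max (g₁ r - t) 0 + max (g₂ r - t) 0 :=
      key g₁ g₂ hg₁_nonneg hg₂_nonneg hg_disj t ht
    have e2 : ∀ r, max (f₁ r + f₂ r - t) 0 = max (f₁ r - t) 0 + max (f₂ r - t) 0 :=
      key f₁ f₂ hf₁_nonneg hf₂_nonneg hf_disj t ht
    simp only [e1, e2]
    rw [integral_add (max_sub_integrable g₁ hg₁_nonneg hg₁_int t ht)
        (max_sub_integrable g₂ hg₂_nonneg hg₂_int t ht),
      integral_add (max_sub_integrable f₁ hf₁_nonneg hf₁_int t ht)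
        (max_sub_integrable f₂ hf₂_nonneg hf₂_int t ht)]
    exact add_le_add (hmaj₁.1 t ht) (hmaj₂.1 t ht)
  · rw [integral_add hg₁_int hg₂_int, integral_add hf₁_int hf₂_int, hmaj₁.2, hmaj₂.2]
end

section
/- Let f, g: ℝⁿ → ℝ₊ be radial integrable functions, f(r) = f_R(‖r‖), g(r) = g_R(‖r‖). Then f ≻ g on ℝⁿ if and only if f̃ ≻ g̃ on ℝ₊, where f̃(x) = f_R(x^{1/n}) and g̃(x) = g_R(x^{1/n}). -/
/-! In polar coordinates a radial integral over `ℝⁿ` is the volume of the unit ball times the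
integral of the profile over `(0, ∞)` in the variable `x = ‖r‖ⁿ`. Applied to `f`, `g` and to
`max (f - t) 0`, `max (g - t) 0`, this multiplies every quantity in the majorization conditions
by the same positive constant. -/

open MeasureTheory Set Real

theorem integral_comp_rpow_one_div_Ioi {F : Type*} [NormedAddCommGroup F] [NormedSpace ℝ F]
    (f : ℝ → F) {p : ℝ} (hp : 0 < p) :
    ∫ y in Ioi 0, f (y ^ (1 / p)) = p • ∫ x in Ioi 0, x ^ (p - 1) • f x := by
  rw [← integral_comp_rpow_Ioi_of_pos hp, ← integral_smul]
  refine setIntegral_congr_fun measurableSet_Ioi fun x hx => ?_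
  rw [one_div, rpow_rpow_inv (le_of_lt hx) hp.ne', mul_smul]

theorem integral_fun_norm_addHaar_eq_integral_comp_rpow
    {E F : Type*} [NormedAddCommGroup E] [NormedSpace ℝ E] [FiniteDimensional ℝ E] [Nontrivial E]
    [MeasurableSpace E] [BorelSpace E] [NormedAddCommGroup F] [NormedSpace ℝ F]
    (μ : Measure E) [μ.IsAddHaarMeasure] (f : ℝ → F) :
    ∫ x, f ‖x‖ ∂μ =
      μ.real (Metric.ball 0 1) • ∫ y in Ioi 0, f (y ^ (1 / (Module.finrank ℝ E : ℝ))) := by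
  rw [integral_fun_norm_addHaar,
    integral_comp_rpow_one_div_Ioi f (Nat.cast_pos.mpr Module.finrank_pos), smul_comm,
    ← Nat.cast_smul_eq_nsmul ℝ]
  congr 2
  refine setIntegral_congr_fun measurableSet_Ioi fun x _ => ?_
  rw [← rpow_natCast, Nat.cast_sub Module.finrank_pos, Nat.cast_one]

theorem radial_majorization_iff_one_dim_general
    (n : ℕ) (hn : 0 < n)
    (f g : EuclideanSpace ℝ (Fin n) → ℝ) (fR gR : ℝ → ℝ)
    (hf_rad : ∀ r, f r = fR ‖r‖) (hg_rad : ∀ r, g r = gR ‖r‖) :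
    ((∀ t : ℝ, 0 ≤ t → ∫ r, max (g r - t) 0 ≤ ∫ r, max (f r - t) 0) ∧
      ∫ r, g r = ∫ r, f r)
    ↔
    ((∀ t : ℝ, 0 ≤ t →
        ∫ x in Ici (0:ℝ), max (gR (x ^ ((1:ℝ)/n)) - t) 0 ≤
          ∫ x in Ici (0:ℝ), max (fR (x ^ ((1:ℝ)/n)) - t) 0) ∧
      ∫ x in Ici (0:ℝ), gR (x ^ ((1:ℝ)/n)) = ∫ x in Ici (0:ℝ), fR (x ^ ((1:ℝ)/n))) := by
  have : Nonempty (Fin n) := ⟨⟨0, hn⟩⟩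
  set ω := volume.real (Metric.ball (0 : EuclideanSpace ℝ (Fin n)) 1)
  have hω : 0 < ω :=
    ENNReal.toReal_pos (Metric.measure_ball_pos _ _ one_pos).ne' measure_ball_lt_top.ne
  have radial (h : EuclideanSpace ℝ (Fin n) → ℝ) (H : ℝ → ℝ) (hH : ∀ r, h r = H ‖r‖) :
      ∫ r, h r = ω * ∫ x in Ici (0:ℝ), H (x ^ ((1:ℝ)/n)) := by
    simp only [hH]
    rw [integral_fun_norm_addHaar_eq_integral_comp_rpow,
      finrank_euclideanSpace_fin, integral_Ici_eq_integral_Ioi, smul_eq_mul]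
  have radial_f (t : ℝ) := radial (fun r => max (f r - t) 0) (fun s => max (fR s - t) 0)
    (by simp [hf_rad])
  have radial_g (t : ℝ) := radial (fun r => max (g r - t) 0) (fun s => max (gR s - t) 0)
    (by simp [hg_rad])
  simp only [radial_f, radial_g, radial f fR hf_rad, radial g gR hg_rad,
    mul_le_mul_iff_right₀ hω, mul_right_inj' hω.ne']

/-- For radial integrable `f, g : ℝⁿ → ℝ₊` with `f r = f_R ‖r‖`,
`g r = g_R ‖r‖`, one has `f ≻ g` on ℝⁿ iff `f̃ ≻ g̃` on ℝ₊, where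
`f̃ x = f_R (x^{1/n})` and `g̃ x = g_R (x^{1/n})`. -/
theorem radial_majorization_iff_one_dim
    (n : ℕ) (hn : 0 < n)
    (f g : EuclideanSpace ℝ (Fin n) → ℝ) (fR gR : ℝ → ℝ)
    (hf_rad : ∀ r, f r = fR ‖r‖) (hg_rad : ∀ r, g r = gR ‖r‖)
    (hf_nonneg : ∀ r, 0 ≤ f r) (hg_nonneg : ∀ r, 0 ≤ g r)
    (hf_int : Integrable f) (hg_int : Integrable g) :
    ((∀ t : ℝ, 0 ≤ t → ∫ r, max (g r - t) 0 ≤ ∫ r, max (f r - t) 0) ∧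
      ∫ r, g r = ∫ r, f r)
    ↔
    ((∀ t : ℝ, 0 ≤ t →
        ∫ x in Ici (0:ℝ), max (gR (x ^ ((1:ℝ)/n)) - t) 0 ≤
          ∫ x in Ici (0:ℝ), max (fR (x ^ ((1:ℝ)/n)) - t) 0) ∧
      ∫ x in Ici (0:ℝ), gR (x ^ ((1:ℝ)/n)) = ∫ x in Ici (0:ℝ), fR (x ^ ((1:ℝ)/n))) :=
  radial_majorization_iff_one_dim_general n hn f g fR gR hf_rad hg_rad
end

section
/- The function f₀(x) = e^{−x} on ℝ₊ majorizes f_b(x) = x e^{−x} on ℝ₊ in the continuous sense. -/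
/-!
With `f₀ = e^{-x} 1_{x ≥ 0}`, the function `x e^{-x} 1_{x ≥ 0} = ∫ f₀(y) f₀(x - y) dy` is the
average of the translates `f₀(· - y)` under the exponential distribution. For a probability
measure `ν`, `(∫ g dν - t)⁺ ≤ ∫ (g - t)⁺ dν` (Jensen for the convex map `s ↦ (s - t)⁺`);
integrating in `x`, swapping the integrals and using translation invariance of Lebesgue measure
shows that averaging translates can only decrease `∫ (f - t)⁺`. In `ℝ≥0∞` the truncated
subtraction `a - t` is exactly `(a - t)⁺`, so the argument runs there without integrability
side conditions. Both functions have mass `Γ(2) = Γ(1) = 1`.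
-/

open MeasureTheory Set Real ProbabilityTheory

open scoped ENNReal

theorem lintegral_average_translate_tsub_le {G : Type*} [MeasurableSpace G] [AddGroup G]
    [MeasurableAdd₂ G] [MeasurableNeg G] (μ : Measure G) [SFinite μ] [μ.IsAddRightInvariant]
    (ν : Measure G) [IsProbabilityMeasure ν] {f : G → ℝ≥0∞} (hf : Measurable f) (t : ℝ≥0∞) :
    ∫⁻ x, (∫⁻ y, f (x - y) ∂ν) - t ∂μ ≤ ∫⁻ x, f x - t ∂μ := by
  have jensen : ∀ x, (∫⁻ y, f (x - y) ∂ν) - t ≤ ∫⁻ y, f (x - y) - t ∂ν := fun x => by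
    rw [tsub_le_iff_right]
    calc ∫⁻ y, f (x - y) ∂ν ≤ ∫⁻ y, (f (x - y) - t + t) ∂ν := lintegral_mono fun y => le_tsub_add
      _ = ∫⁻ y, f (x - y) - t ∂ν + t := by
        rw [lintegral_add_right _ measurable_const, lintegral_const, measure_univ, mul_one]
  calc ∫⁻ x, (∫⁻ y, f (x - y) ∂ν) - t ∂μ
      ≤ ∫⁻ x, ∫⁻ y, f (x - y) - t ∂ν ∂μ := lintegral_mono jensen
    _ = ∫⁻ y, ∫⁻ x, f (x - y) - t ∂μ ∂ν :=
      lintegral_lintegral_swap ((hf.comp measurable_sub).sub_const t).aemeasurable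
    _ = ∫⁻ x, f x - t ∂μ := by
      simp_rw [lintegral_sub_right_eq_self (fun x => f x - t), lintegral_const, measure_univ,
        mul_one]

theorem measurable_exponentialPDF (r : ℝ) : Measurable (exponentialPDF r) :=
  (measurable_exponentialPDFReal r).ennreal_ofReal

theorem lintegral_exponentialPDF_one_sub_expMeasure_one (x : ℝ) :
    ∫⁻ y, exponentialPDF 1 (x - y) ∂expMeasure 1 = ENNReal.ofReal (x * exp (-x)) := by
  have hprod : ∀ y, exponentialPDF 1 y * exponentialPDF 1 (x - y) =
      (Icc 0 x).indicator (fun _ => ENNReal.ofReal (exp (-x))) y := fun y => by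
    by_cases hy : 0 ≤ y
    · by_cases hyx : y ≤ x
      · rw [exponentialPDF_of_nonneg hy, exponentialPDF_of_nonneg (sub_nonneg.2 hyx),
          indicator_of_mem (show y ∈ Icc 0 x from ⟨hy, hyx⟩), ← ENNReal.ofReal_mul (by positivity)]
        congr 1
        simp only [one_mul, ← exp_add]
        ring_nf
      · rw [exponentialPDF_of_neg (x := x - y) (by linarith), mul_zero,
          indicator_of_notMem fun h => hyx h.2]
    · rw [exponentialPDF_of_neg (not_le.1 hy), zero_mul, indicator_of_notMem fun h => hy h.1]
  change ∫⁻ y, _ ∂volume.withDensity (exponentialPDF 1) = _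
  rw [lintegral_withDensity_eq_lintegral_mul _ (measurable_exponentialPDF 1)
    (g := fun y => exponentialPDF 1 (x - y))
    ((measurable_exponentialPDF 1).comp (measurable_id.const_sub x))]
  simp only [Pi.mul_apply, hprod]
  rw [lintegral_indicator_const measurableSet_Icc, Real.volume_Icc, sub_zero,
    ← ENNReal.ofReal_mul (exp_pos _).le, mul_comm]

theorem lintegral_exponentialPDF_one_tsub_eq_setLIntegral (c : ℝ≥0∞) :
    ∫⁻ x, exponentialPDF 1 x - c = ∫⁻ x in Ici 0, ENNReal.ofReal (exp (-x)) - c := by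
  rw [← lintegral_indicator measurableSet_Ici]
  congr 1
  funext x
  by_cases hx : 0 ≤ x
  · simp [exponentialPDF_of_nonneg hx, hx]
  · simp [exponentialPDF_of_neg (not_le.1 hx), hx]

theorem integral_max_sub_zero_eq_toReal {α : Type*} [MeasurableSpace α] {μ : Measure α}
    {h : α → ℝ} (hh : AEStronglyMeasurable h μ) {t : ℝ} (ht : 0 ≤ t) :
    ∫ x, max (h x - t) 0 ∂μ = (∫⁻ x, ENNReal.ofReal (h x) - ENNReal.ofReal t ∂μ).toReal := by
  rw [integral_eq_lintegral_of_nonneg_ae (f := fun x => max (h x - t) 0)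
    (ae_of_all _ fun x => le_max_right _ _) (by fun_prop)]
  congr 1
  refine lintegral_congr fun x => ?_
  rw [← ENNReal.ofReal_sub _ ht]
  simp

theorem integral_exp_neg_Ici : ∫ x in Ici (0:ℝ), exp (-x) = 1 := by
  rw [integral_Ici_eq_integral_Ioi, integral_exp_neg_Ioi_zero]

theorem integral_mul_exp_neg_Ici : ∫ x in Ici (0:ℝ), x * exp (-x) = 1 := by
  rw [integral_Ici_eq_integral_Ioi, ← Real.Gamma_two, Real.Gamma_eq_integral two_pos]
  refine setIntegral_congr_fun measurableSet_Ioi fun x _ => ?_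
  norm_num [mul_comm]

/-- `f₀(x) = e^{−x}` majorizes `f_b(x) = x e^{−x}` on ℝ₊. -/
theorem f0_majorizes_fb :
    (∀ t : ℝ, 0 ≤ t →
      ∫ x in Ici (0:ℝ), max (x * exp (-x) - t) 0 ≤
        ∫ x in Ici (0:ℝ), max (exp (-x) - t) 0) ∧
    ∫ x in Ici (0:ℝ), x * exp (-x) = ∫ x in Ici (0:ℝ), exp (-x) := by
  refine ⟨fun t ht => ?_, by rw [integral_exp_neg_Ici, integral_mul_exp_neg_Ici]⟩
  have := isProbabilityMeasure_expMeasure one_pos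
  have hconv := lintegral_average_translate_tsub_le volume (expMeasure 1)
    (measurable_exponentialPDF 1) (ENNReal.ofReal t)
  simp only [lintegral_exponentialPDF_one_sub_expMeasure_one] at hconv
  have hfin : ∫⁻ x, exponentialPDF 1 x - ENNReal.ofReal t ≠ ∞ :=
    ne_top_of_le_ne_top (by simp) (lintegral_mono fun x => tsub_le_self)
  rw [integral_max_sub_zero_eq_toReal (by fun_prop) ht,
    integral_max_sub_zero_eq_toReal (by fun_prop) ht,
    ← lintegral_exponentialPDF_one_tsub_eq_setLIntegral]
  exact ENNReal.toReal_mono hfin ((setLIntegral_le_lintegral _ _).trans hconv)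
end

section
/- The function f₀(x) = e^{−x} on ℝ₊ majorizes f_d(x) = (1/2) x² e^{−x} on ℝ₊ in the continuous sense. -/
/-!
Let `w(s) = s e^{-s}` on `s ≥ 0`, a probability density. Then `f_d = w ⋆ f₀`, and convolution with
a probability density can only flatten a function: for `t ≥ 0`, Jensen's inequality for the convex
map `y ↦ (y - t)₊` gives `(w ⋆ f - t)₊ ≤ w ⋆ (f - t)₊` pointwise, and integrating this with
Tonelli and translation invariance yields `∫ (w ⋆ f - t)₊ ≤ ∫ (f - t)₊`. Equality of the total
masses is `∫ w ⋆ f = ∫ w · ∫ f`.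
-/

open MeasureTheory Set Real ContinuousLinearMap
open scoped Convolution

theorem ofReal_integral_le_lintegral_ofReal {α : Type*} [MeasurableSpace α] {μ : Measure α}
    (f : α → ℝ) : ENNReal.ofReal (∫ a, f a ∂μ) ≤ ∫⁻ a, ENNReal.ofReal (f a) ∂μ := by
  by_cases hf : Integrable f μ
  · calc ENNReal.ofReal (∫ a, f a ∂μ)
        ≤ ENNReal.ofReal (∫ a, max (f a) 0 ∂μ) :=
          ENNReal.ofReal_le_ofReal (integral_mono hf hf.pos_part fun a => le_max_left _ _)
      _ = ∫⁻ a, ENNReal.ofReal (max (f a) 0) ∂μ :=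
          ofReal_integral_eq_lintegral_ofReal hf.pos_part (ae_of_all _ fun a => le_max_right _ _)
      _ = ∫⁻ a, ENNReal.ofReal (f a) ∂μ := by simp
  · simp [integral_undef hf]

section Convolution

variable {G : Type*} [MeasurableSpace G] [AddGroup G] {μ : Measure G} {w f : G → ℝ} {t : ℝ}

theorem ofReal_convolution_sub_le (hw : 0 ≤ w) (hwi : Integrable w μ) (hw1 : ∫ s, w s ∂μ = 1)
    (ht : 0 ≤ t) (x : G) :
    ENNReal.ofReal ((w ⋆[lsmul ℝ ℝ, μ] f) x - t) ≤
      ∫⁻ s, ENNReal.ofReal (w s) * ENNReal.ofReal (f (x - s) - t) ∂μ := by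
  rw [convolution_lsmul]
  simp_rw [smul_eq_mul]
  by_cases hi : Integrable (fun s => w s * f (x - s)) μ
  · have hmass : ∫ s, w s * f (x - s) ∂μ - t = ∫ s, w s * (f (x - s) - t) ∂μ := by
      simp_rw [mul_sub]
      rw [integral_sub hi (hwi.mul_const t), integral_mul_const, hw1, one_mul]
    rw [hmass]
    refine (ofReal_integral_le_lintegral_ofReal _).trans_eq ?_
    simp_rw [ENNReal.ofReal_mul (hw _)]
  · -- the convolution takes the junk value `0` here, and `(0 - t)₊ = 0` as `t ≥ 0`
    rw [integral_undef hi, zero_sub, ENNReal.ofReal_of_nonpos (neg_nonpos.2 ht)]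
    exact zero_le

variable [MeasurableAdd₂ G] [MeasurableNeg G] [SFinite μ] [μ.IsAddRightInvariant]

theorem lintegral_ofReal_convolution_sub_le (hw : 0 ≤ w) (hwi : Integrable w μ)
    (hw1 : ∫ s, w s ∂μ = 1) (hf : AEMeasurable f μ) (ht : 0 ≤ t) :
    ∫⁻ x, ENNReal.ofReal ((w ⋆[lsmul ℝ ℝ, μ] f) x - t) ∂μ ≤
      ∫⁻ x, ENNReal.ofReal (f x - t) ∂μ := by
  have hwm : AEMeasurable (fun s => ENNReal.ofReal (w s)) μ := hwi.aemeasurable.ennreal_ofReal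
  have hfm : AEMeasurable (fun p : G × G => ENNReal.ofReal (f (p.1 - p.2) - t)) (μ.prod μ) :=
    ((hf.sub_const t).ennreal_ofReal).comp_quasiMeasurePreserving
      (quasiMeasurePreserving_sub_of_right_invariant μ μ)
  have hw_mass : ∫⁻ s, ENNReal.ofReal (w s) ∂μ = 1 := by
    rw [← ofReal_integral_eq_lintegral_ofReal hwi (ae_of_all _ hw), hw1, ENNReal.ofReal_one]
  calc ∫⁻ x, ENNReal.ofReal ((w ⋆[lsmul ℝ ℝ, μ] f) x - t) ∂μ
      ≤ ∫⁻ x, ∫⁻ s, ENNReal.ofReal (w s) * ENNReal.ofReal (f (x - s) - t) ∂μ ∂μ :=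
        lintegral_mono fun x => ofReal_convolution_sub_le hw hwi hw1 ht x
    _ = ∫⁻ s, ∫⁻ x, ENNReal.ofReal (w s) * ENNReal.ofReal (f (x - s) - t) ∂μ ∂μ :=
        lintegral_lintegral_swap ((hwm.comp_snd).mul hfm)
    _ = ∫⁻ s, ENNReal.ofReal (w s) * ∫⁻ x, ENNReal.ofReal (f x - t) ∂μ ∂μ := by
        congr 1 with s
        rw [lintegral_const_mul' _ _ ENNReal.ofReal_ne_top,
          lintegral_sub_right_eq_self (fun x => ENNReal.ofReal (f x - t))]
    _ = ∫⁻ x, ENNReal.ofReal (f x - t) ∂μ := by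
        rw [lintegral_mul_const'' _ hwm, hw_mass, one_mul]

theorem integral_max_convolution_sub_le (hw : 0 ≤ w) (hwi : Integrable w μ)
    (hw1 : ∫ s, w s ∂μ = 1) (hf : Integrable f μ) (ht : 0 ≤ t) :
    ∫ x, max ((w ⋆[lsmul ℝ ℝ, μ] f) x - t) 0 ∂μ ≤ ∫ x, max (f x - t) 0 ∂μ := by
  have hf_t : Integrable (fun x => max (f x - t) 0) μ := by
    refine hf.pos_part.mono (by fun_prop) (ae_of_all _ fun x => ?_)
    simp only [norm_of_nonneg (le_max_right _ _)]
    exact max_le_max_right 0 (sub_le_self _ ht)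
  by_cases hg : Integrable (fun x => max ((w ⋆[lsmul ℝ ℝ, μ] f) x - t) 0) μ
  · rw [← ENNReal.ofReal_le_ofReal_iff (integral_nonneg fun x => le_max_right (f x - t) 0),
      ofReal_integral_eq_lintegral_ofReal hg (ae_of_all _ fun _ => le_max_right _ _),
      ofReal_integral_eq_lintegral_ofReal hf_t (ae_of_all _ fun _ => le_max_right _ _)]
    simpa using lintegral_ofReal_convolution_sub_le hw hwi hw1 hf.aemeasurable ht
  · rw [integral_undef hg]
    exact integral_nonneg fun x => le_max_right _ _

end Convolution

theorem integrable_indicator_Ici_mul_exp_neg :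
    Integrable ((Ici (0 : ℝ)).indicator fun s => s * exp (-s)) := by
  rw [integrable_indicator_iff measurableSet_Ici, integrableOn_Ici_iff_integrableOn_Ioi]
  have := GammaIntegral_convergent (s := 2) two_pos
  norm_num at this
  simpa only [mul_comm] using this

theorem integral_indicator_Ici_mul_exp_neg :
    ∫ s, (Ici (0 : ℝ)).indicator (fun s => s * exp (-s)) s = 1 := by
  rw [integral_indicator measurableSet_Ici, integral_Ici_eq_integral_Ioi]
  have := Gamma_eq_integral (s := 2) two_pos
  norm_num [Gamma_two] at this
  simpa only [mul_comm] using this.symm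

theorem integrable_indicator_Ici_exp_neg :
    Integrable ((Ici (0 : ℝ)).indicator fun s => exp (-s)) := by
  rw [integrable_indicator_iff measurableSet_Ici, integrableOn_Ici_iff_integrableOn_Ioi]
  exact integrableOn_exp_neg_Ioi 0

theorem max_indicator_sub_eq_indicator {α : Type*} (s : Set α) (F : α → ℝ) {t : ℝ} (ht : 0 ≤ t)
    (x : α) : max (s.indicator F x - t) 0 = s.indicator (fun y => max (F y - t) 0) x := by
  by_cases hx : x ∈ s <;> simp [hx, ht]

theorem convolution_mul_exp_neg_exp_neg :
    ((Ici 0).indicator (fun s => s * exp (-s)) ⋆[lsmul ℝ ℝ] (Ici 0).indicator (fun s => exp (-s)) :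
      ℝ → ℝ) = (Ici 0).indicator (fun x => 1 / 2 * x ^ 2 * exp (-x)) := by
  ext x
  have hintegrand : ∀ s, (Ici 0).indicator (fun s => s * exp (-s)) s *
      (Ici 0).indicator (fun s => exp (-s)) (x - s) =
        (Icc 0 x).indicator (fun s => s * exp (-x)) s := by
    intro s
    by_cases h0 : 0 ≤ s <;> by_cases h1 : s ≤ x <;>
      simp [indicator, h0, h1, mul_assoc, ← exp_add, neg_add_eq_sub]
  rw [convolution_lsmul]
  simp_rw [smul_eq_mul, hintegrand, integral_indicator measurableSet_Icc]
  rcases lt_or_ge x 0 with hx | hx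
  · simp [hx]
  · rw [integral_Icc_eq_integral_Ioc, ← intervalIntegral.integral_of_le hx,
      intervalIntegral.integral_mul_const, integral_id, indicator_of_mem (mem_Ici.2 hx)]
    ring

/-- `f₀(x) = e^{−x}` majorizes `f_d(x) = (1/2) x² e^{−x}` on ℝ₊. -/
theorem f0_majorizes_fd :
    (∀ t : ℝ, 0 ≤ t →
      ∫ x in Ici (0:ℝ), max ((1/2) * x^2 * exp (-x) - t) 0 ≤
        ∫ x in Ici (0:ℝ), max (exp (-x) - t) 0) ∧
    ∫ x in Ici (0:ℝ), (1/2) * x^2 * exp (-x) = ∫ x in Ici (0:ℝ), exp (-x) := by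
  have hw : 0 ≤ (Ici (0 : ℝ)).indicator fun s => s * exp (-s) :=
    indicator_nonneg fun s hs => mul_nonneg hs (exp_pos _).le
  refine ⟨fun t ht => ?_, ?_⟩
  · have h := integral_max_convolution_sub_le hw integrable_indicator_Ici_mul_exp_neg
      integral_indicator_Ici_mul_exp_neg integrable_indicator_Ici_exp_neg ht
    simp_rw [convolution_mul_exp_neg_exp_neg, max_indicator_sub_eq_indicator _ _ ht,
      integral_indicator measurableSet_Ici] at h
    exact h
  · have h := integral_convolution (lsmul ℝ ℝ) integrable_indicator_Ici_mul_exp_neg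
      integrable_indicator_Ici_exp_neg
    rw [convolution_mul_exp_neg_exp_neg, integral_indicator_Ici_mul_exp_neg,
      integral_indicator measurableSet_Ici, integral_indicator measurableSet_Ici] at h
    simpa using h
end

section
/- For every t ∈ [0,1], setting a_t = 1 − √((1−t)/(1+t)), b_t = 1 − ln(1+t) − √((1−t)/(1+t)), and g_t(x) = ((t+1)/2) e^{−x} (x − 1 + √((1−t)/(1+t)))², one has ∫₀^{a_t} g_t(x) dx = ∫₀^{b_t} e^{−x} dx and ∫_{a_t}^∞ g_t(x) dx = ∫_{b_t}^∞ e^{−x} dx. -/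
/-!
With `s = √((1-t)/(1+t))` and `a = 1 - s`, the primitive `-e^{-x} ((x-a)² + 2(x-a) + 2)` of
`e^{-x} (x-a)²` gives `∫_a^∞ e^{-x} (x-a)² = 2 e^{-a}` and
`∫_0^a e^{-x} (x-a)² = a² - 2a + 2 - 2 e^{-a} = s² + 1 - 2 e^{-a}`.
Since `((t+1)/2) (s² + 1) = 1` and `e^{-b_t} = (1+t) e^{-a}`, the two integrals of `g_t` are
`1 - e^{-b_t}` and `e^{-b_t}`, which are the two integrals of `e^{-x}`.
-/

open MeasureTheory Set Real Filter Topology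

lemma tendsto_exp_neg_mul_pow_sub_atTop (p : ℝ) (n : ℕ) :
    Tendsto (fun x => exp (-x) * (x - p) ^ n) atTop (𝓝 0) := by
  have h := ((tendsto_pow_mul_exp_neg_atTop_nhds_zero n).comp
    (tendsto_atTop_add_const_right _ (-p) tendsto_id)).const_mul (exp (-p))
  rw [mul_zero] at h
  refine h.congr fun x => ?_
  simp only [Function.comp_apply, id]
  rw [← sub_eq_add_neg, neg_sub, mul_left_comm, ← exp_add]
  ring_nf

lemma hasDerivAt_exp_neg_mul_sq_primitive (p x : ℝ) :
    HasDerivAt (fun y => -(exp (-y) * (y - p) ^ 2 + 2 * (exp (-y) * (y - p)) + 2 * exp (-y)))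
      (exp (-x) * (x - p) ^ 2) x := by
  have he : HasDerivAt (fun y => exp (-y)) (-exp (-x)) x := by
    simpa using (hasDerivAt_neg x).exp
  have hl : HasDerivAt (fun y => y - p) 1 x := (hasDerivAt_id x).sub_const p
  exact ((he.mul (hl.pow 2)).add ((he.mul hl).const_mul 2) |>.add (he.const_mul 2)).neg
    |>.congr_deriv (by simp only [Pi.pow_apply]; ring)

lemma integral_Ioi_exp_neg_mul_sq_sub (p : ℝ) :
    ∫ x in Ioi p, exp (-x) * (x - p) ^ 2 = 2 * exp (-p) := by
  rw [integral_Ioi_of_hasDerivAt_of_nonneg (by fun_prop)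
    (fun x _ => hasDerivAt_exp_neg_mul_sq_primitive p x) (fun x _ => by positivity)
    (l := 0)]
  · simp
  · simpa using (((tendsto_exp_neg_mul_pow_sub_atTop p 2).add
      ((tendsto_exp_neg_mul_pow_sub_atTop p 1).const_mul 2)).add
      ((tendsto_exp_neg_mul_pow_sub_atTop p 0).const_mul 2)).neg

lemma integral_exp_neg_mul_sq_sub (p : ℝ) :
    ∫ x in (0 : ℝ)..p, exp (-x) * (x - p) ^ 2 = p ^ 2 - 2 * p + 2 - 2 * exp (-p) := by
  rw [intervalIntegral.integral_eq_sub_of_hasDerivAt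
    (fun x _ => hasDerivAt_exp_neg_mul_sq_primitive p x)
    (Continuous.intervalIntegrable (by fun_prop) _ _)]
  simp only [sub_self, neg_zero, exp_zero]
  ring

lemma integral_exp_neg (a b : ℝ) : ∫ x in a..b, exp (-x) = exp (-a) - exp (-b) := by
  rw [intervalIntegral.integral_comp_neg (fun x => exp x), integral_exp]

/-- For `t ∈ [0,1]`, with `a_t = 1 − √((1−t)/(1+t))`,
`b_t = 1 − ln(1+t) − √((1−t)/(1+t))` and
`g_t(x) = ((t+1)/2) e^{−x} (x − 1 + √((1−t)/(1+t)))²`, one has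
`∫₀^{a_t} g_t = ∫₀^{b_t} e^{−x}` and `∫_{a_t}^∞ g_t = ∫_{b_t}^∞ e^{−x}`. -/
theorem split_normalization_gt (t : ℝ) (ht₀ : 0 ≤ t) (ht₁ : t ≤ 1) :
    (∫ x in (0:ℝ)..(1 - Real.sqrt ((1 - t) / (1 + t))),
        (t + 1) / 2 * exp (-x) * (x - 1 + Real.sqrt ((1 - t) / (1 + t)))^2 =
      ∫ x in (0:ℝ)..(1 - Real.log (1 + t) - Real.sqrt ((1 - t) / (1 + t))), exp (-x)) ∧
    (∫ x in Ici (1 - Real.sqrt ((1 - t) / (1 + t))),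
        (t + 1) / 2 * exp (-x) * (x - 1 + Real.sqrt ((1 - t) / (1 + t)))^2 =
      ∫ x in Ici (1 - Real.log (1 + t) - Real.sqrt ((1 - t) / (1 + t))), exp (-x)) := by
  set s := Real.sqrt ((1 - t) / (1 + t))
  set a := 1 - s
  have ht : 0 < 1 + t := by linarith
  have hs : s ^ 2 = (1 - t) / (1 + t) := sq_sqrt (div_nonneg (by linarith) ht.le)
  have hnorm : (t + 1) / 2 * (a ^ 2 - 2 * a + 2) = 1 := by
    rw [show a ^ 2 - 2 * a + 2 = s ^ 2 + 1 by ring, hs]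
    field_simp
    ring
  have hb : exp (-(1 - log (1 + t) - s)) = (1 + t) * exp (-a) := by
    rw [show -(1 - log (1 + t) - s) = log (1 + t) + -a by ring, exp_add, exp_log ht]
  have hg : (fun x => (t + 1) / 2 * exp (-x) * (x - 1 + s) ^ 2) =
      fun x => (t + 1) / 2 * (exp (-x) * (x - a) ^ 2) := by
    ext x
    ring
  rw [hg, intervalIntegral.integral_const_mul, integral_exp_neg_mul_sq_sub, integral_exp_neg,
    integral_Ici_eq_integral_Ioi, integral_const_mul, integral_Ioi_exp_neg_mul_sq_sub,
    integral_Ici_eq_integral_Ioi, integral_exp_neg_Ioi, hb, neg_zero, exp_zero]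
  exact ⟨by linear_combination hnorm, by ring⟩
end

section
/- If f ≻ g under continuous majorization (with f, g probability densities on the same domain), then the Shannon differential entropy satisfies h(f) ≤ h(g), where h(f) = −∫ f(r) ln f(r) dr, assuming both entropies exist. -/
open MeasureTheory Set Real
open scoped ENNReal

/-!
Write `x log x = x - L x + U x` with `L = mulLogLower` and `U = mulLogUpper`; for `x ≥ 0`,
`L x = ∫₀¹ min(x, t) dt/t` and `U x = ∫₁^∞ (x - t)⁺ dt/t`. By Tonelli,
`∫ L ∘ f = ∫₀¹ (∫ min(f, t)) dt/t` and `∫ U ∘ f = ∫₁^∞ (∫ (f - t)⁺) dt/t`.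
Majorization says that `∫ (f - t)⁺` dominates `∫ (g - t)⁺`; since `f` and `g` have the same mass,
`∫ min(f, t) = 1 - ∫ (f - t)⁺` is in turn dominated by `∫ min(g, t)`. Hence `∫ L ∘ f ≤ ∫ L ∘ g`
and `∫ U ∘ g ≤ ∫ U ∘ f`, so `∫ f log f ≥ ∫ g log g`.
-/

noncomputable def mulLogLower (x : ℝ) : ℝ := min x 1 - min x 1 * log (min x 1)

noncomputable def mulLogUpper (x : ℝ) : ℝ := max x 1 * log (max x 1) - max x 1 + 1

theorem mul_log_eq_sub_add (x : ℝ) : x * log x = x - mulLogLower x + mulLogUpper x := by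
  rcases le_total x 1 with h | h <;> simp [mulLogLower, mulLogUpper, h]

theorem mulLogLower_nonneg {x : ℝ} (hx : 0 ≤ x) : 0 ≤ mulLogLower x := by
  have hm : 0 ≤ min x 1 := le_min hx zero_le_one
  have := mul_nonpos_of_nonneg_of_nonpos hm (log_nonpos hm (min_le_right x 1))
  unfold mulLogLower; linarith

theorem mulLogUpper_nonneg (x : ℝ) : 0 ≤ mulLogUpper x := by
  have hM : 0 < max x 1 := lt_max_of_lt_right one_pos
  have := log_le_sub_one_of_pos (inv_pos.2 hM)
  rw [log_inv] at this
  have := mul_le_mul_of_nonneg_left this hM.le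
  rw [mul_sub, mul_inv_cancel₀ hM.ne'] at this
  unfold mulLogUpper; linarith

theorem mulLogUpper_le_abs_mul_log (x : ℝ) : mulLogUpper x ≤ |x * log x| := by
  rcases le_total x 1 with h | h
  · simpa [mulLogUpper, h] using abs_nonneg (x * log x)
  · have := mul_nonneg (zero_le_one.trans h) (log_nonneg h)
    simp only [mulLogUpper, max_eq_left h, abs_of_nonneg this]; linarith

theorem continuous_mulLogUpper : Continuous mulLogUpper := by
  unfold mulLogUpper
  have := continuous_mul_log.comp (continuous_id.max (continuous_const (y := (1 : ℝ))))
  exact (this.sub (continuous_id.max continuous_const)).add continuous_const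

theorem lintegral_Ioc_ofReal_eq_intervalIntegral {φ : ℝ → ℝ} {a b : ℝ} (hab : a ≤ b)
    (hφ : ContinuousOn φ (Icc a b)) (hφ0 : ∀ t ∈ Ioc a b, 0 ≤ φ t) :
    ∫⁻ t in Ioc a b, ENNReal.ofReal (φ t) = ENNReal.ofReal (∫ t in a..b, φ t) := by
  rw [intervalIntegral.integral_of_le hab, ofReal_integral_eq_lintegral_ofReal
    (hφ.integrableOn_Icc.mono_set Ioc_subset_Icc_self) ((ae_restrict_iff' measurableSet_Ioc).2
      (ae_of_all _ hφ0))]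

theorem lintegral_Ioc_ofReal_const_div {a b c : ℝ} (ha : 0 < a) (hab : a ≤ b) (hc : 0 ≤ c) :
    ∫⁻ t in Ioc a b, ENNReal.ofReal (c / t) = ENNReal.ofReal (c * log (b / a)) := by
  rw [lintegral_Ioc_ofReal_eq_intervalIntegral (φ := fun t => c / t) hab
    (continuousOn_const.div continuousOn_id fun t ht => (ha.trans_le ht.1).ne')
    fun t ht => div_nonneg hc (ha.trans ht.1).le]
  simp_rw [div_eq_mul_inv c]
  rw [intervalIntegral.integral_const_mul, integral_inv_of_pos ha (ha.trans_le hab)]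

theorem lintegral_Ioc_ofReal_min_div {x : ℝ} (hx : 0 ≤ x) :
    ∫⁻ t in Ioc 0 1, ENNReal.ofReal (min x t / t) = ENNReal.ofReal (mulLogLower x) := by
  set m := min x 1 with hm
  have hm0 : 0 ≤ m := le_min hx zero_le_one
  have hm1 : m ≤ 1 := min_le_right x 1
  have hmin : ∀ t ∈ Ioc (0 : ℝ) 1, min x t = min m t := fun t ht => by
    rw [hm, min_assoc, min_eq_right ht.2]
  have hlow : ∫⁻ t in Ioc 0 m, ENNReal.ofReal (min m t / t) = ENNReal.ofReal m := by
    rw [setLIntegral_congr_fun measurableSet_Ioc fun t ht => by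
      rw [min_eq_right ht.2, div_self ht.1.ne', ENNReal.ofReal_one]]
    simp
  have hhigh : ∫⁻ t in Ioc m 1, ENNReal.ofReal (min m t / t) = ENNReal.ofReal (-(m * log m)) := by
    rw [setLIntegral_congr_fun measurableSet_Ioc fun t ht => by rw [min_eq_left ht.1.le]]
    rcases hm0.eq_or_lt with h0 | h0
    · simp [← h0]
    · rw [lintegral_Ioc_ofReal_const_div h0 hm1 hm0, one_div, log_inv, mul_neg]
  have hnn : 0 ≤ -(m * log m) :=
    neg_nonneg.2 (mul_nonpos_of_nonneg_of_nonpos hm0 (log_nonpos hm0 hm1))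
  rw [setLIntegral_congr_fun measurableSet_Ioc fun t ht => by rw [hmin t ht],
    ← Ioc_union_Ioc_eq_Ioc hm0 hm1,
    lintegral_union measurableSet_Ioc (Ioc_disjoint_Ioc_of_le le_rfl), hlow, hhigh,
    ← ENNReal.ofReal_add hm0 hnn, mulLogLower, sub_eq_add_neg]

theorem lintegral_Ioi_ofReal_max_sub_div (x : ℝ) :
    ∫⁻ t in Ioi 1, ENNReal.ofReal (max (x - t) 0 / t) = ENNReal.ofReal (mulLogUpper x) := by
  set M := max x 1
  have hM1 : 1 ≤ M := le_max_right x 1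
  have hbelow : ∀ t ∈ Ioc 1 M, max (x - t) 0 / t = M / t - 1 := fun t ht => by
    have hxM : M = x := (max_choice x 1).resolve_right fun h => by linarith [ht.1, ht.2]
    have ht0 : 0 < t := one_pos.trans ht.1
    rw [max_eq_left (by linarith [ht.2]), hxM]
    field_simp
  have habove : ∫⁻ t in Ioi M, ENNReal.ofReal (max (x - t) 0 / t) = 0 := by
    rw [setLIntegral_congr_fun measurableSet_Ioi fun t (ht : M < t) => by
      rw [max_eq_right (by linarith [le_max_left x 1]), zero_div, ENNReal.ofReal_zero]]
    exact lintegral_zero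
  have hne : ∀ t ∈ Icc 1 M, t ≠ 0 := fun t ht => (one_pos.trans_le ht.1).ne'
  have hcont : ContinuousOn (fun t => M / t - 1) (Icc 1 M) :=
    (continuousOn_const.div continuousOn_id hne).sub continuousOn_const
  have hint : ∫ t in (1 : ℝ)..M, (M / t - 1) = M * log M - (M - 1) := by
    simp_rw [div_eq_mul_inv M]
    rw [intervalIntegral.integral_sub _ intervalIntegrable_const,
      intervalIntegral.integral_const_mul, integral_inv_of_pos one_pos (one_pos.trans_le hM1),
      div_one, intervalIntegral.integral_const, smul_eq_mul, mul_one]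
    exact (intervalIntegral.intervalIntegrable_inv (fun t ht => hne t (uIcc_of_le hM1 ▸ ht))
      (continuousOn_id.mono (subset_univ _))).const_mul M
  rw [← Ioc_union_Ioi_eq_Ioi hM1, lintegral_union measurableSet_Ioi (Ioc_disjoint_Ioi le_rfl),
    habove, add_zero, setLIntegral_congr_fun measurableSet_Ioc fun t ht => by rw [hbelow t ht],
    lintegral_Ioc_ofReal_eq_intervalIntegral (φ := fun t => M / t - 1) hM1, hint, mulLogUpper]
  · congr 1; ring
  · exact hcont
  · intro t ht
    rw [← hbelow t ht]
    exact div_nonneg (le_max_right _ _) (one_pos.trans ht.1).le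

section Tonelli

variable {α γ : Type*} [MeasurableSpace α] [MeasurableSpace γ] {μ : Measure α} {ν : Measure γ}
  [SFinite ν]

/-- `μ` need not be s-finite: an integrable `f` vanishes off a set on which `μ` is σ-finite. -/
theorem lintegral_lintegral_swap_comp_of_integrable {f : α → ℝ} (hf : Integrable f μ)
    {k : ℝ → γ → ℝ≥0∞} (hk : Measurable (Function.uncurry k)) (hk0 : ∀ᵐ t ∂ν, k 0 t = 0) :
    ∫⁻ t, ∫⁻ r, k (f r) t ∂μ ∂ν = ∫⁻ r, ∫⁻ t, k (f r) t ∂ν ∂μ := by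
  obtain ⟨S, hS, hfS, hσ⟩ := hf.aefinStronglyMeasurable.exists_set_sigmaFinite
  have hrestrict : ∀ h : ℝ → ℝ≥0∞, h 0 = 0 →
      ∫⁻ r, h (f r) ∂μ = ∫⁻ r, h (f r) ∂μ.restrict S := fun h h0 => by
    have hSc : ∫⁻ r in Sᶜ, h (f r) ∂μ = 0 :=
      (lintegral_congr_ae (g := fun _ => 0) (hfS.mono fun r hr => by simp [hr, h0])).trans
        lintegral_zero
    rw [← lintegral_add_compl _ hS, hSc, add_zero]
  have hmeas : AEMeasurable (Function.uncurry fun t r => k (f r) t) (ν.prod (μ.restrict S)) :=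
    hk.comp_aemeasurable (hf.aemeasurable.restrict.comp_snd.prodMk measurable_fst.aemeasurable)
  calc ∫⁻ t, ∫⁻ r, k (f r) t ∂μ ∂ν = ∫⁻ t, ∫⁻ r, k (f r) t ∂μ.restrict S ∂ν :=
        lintegral_congr_ae (by filter_upwards [hk0] with t ht using hrestrict (k · t) ht)
    _ = ∫⁻ r, ∫⁻ t, k (f r) t ∂ν ∂μ.restrict S := lintegral_lintegral_swap hmeas
    _ = ∫⁻ r, ∫⁻ t, k (f r) t ∂ν ∂μ :=
        (hrestrict (fun x => ∫⁻ t, k x t ∂ν) ((lintegral_congr_ae hk0).trans lintegral_zero)).symm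

theorem lintegral_lintegral_le_of_forall_lintegral_le {f g : α → ℝ} (hf : Integrable f μ)
    (hg : Integrable g μ) {k : ℝ → γ → ℝ≥0∞} (hk : Measurable (Function.uncurry k))
    (hk0 : ∀ᵐ t ∂ν, k 0 t = 0) (hfg : ∀ᵐ t ∂ν, ∫⁻ r, k (f r) t ∂μ ≤ ∫⁻ r, k (g r) t ∂μ) :
    ∫⁻ r, ∫⁻ t, k (f r) t ∂ν ∂μ ≤ ∫⁻ r, ∫⁻ t, k (g r) t ∂ν ∂μ := by
  rw [← lintegral_lintegral_swap_comp_of_integrable hf hk hk0,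
    ← lintegral_lintegral_swap_comp_of_integrable hg hk hk0]
  exact lintegral_mono_ae hfg

end Tonelli

theorem sub_max_sub_zero {β : Type*} [AddCommGroup β] [LinearOrder β] [IsOrderedAddMonoid β]
    (a t : β) : a - max (a - t) 0 = min a t := by
  rcases le_total a t with h | h <;> simp [h, sub_nonpos.2, sub_nonneg.2]

section Majorization

variable {α : Type*} [MeasurableSpace α] {μ : Measure α} {f g : α → ℝ}

theorem lintegral_ofReal_le_lintegral_ofReal_iff (hf : Integrable f μ) (hg : Integrable g μ)
    (hf0 : 0 ≤ᵐ[μ] f) (hg0 : 0 ≤ᵐ[μ] g) :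
    ∫⁻ r, ENNReal.ofReal (f r) ∂μ ≤ ∫⁻ r, ENNReal.ofReal (g r) ∂μ ↔ ∫ r, f r ∂μ ≤ ∫ r, g r ∂μ := by
  rw [← ofReal_integral_eq_lintegral_ofReal hf hf0, ← ofReal_integral_eq_lintegral_ofReal hg hg0,
    ENNReal.ofReal_le_ofReal_iff (integral_nonneg_of_ae hg0)]

theorem MeasureTheory.Integrable.max_sub_const_zero (hf : Integrable f μ) {t : ℝ} (ht : 0 ≤ t) :
    Integrable (fun r => max (f r - t) 0) μ := by
  refine hf.norm.mono' ((continuous_id.sub continuous_const).max continuous_const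
    |>.comp_aestronglyMeasurable hf.1) (ae_of_all _ fun r => ?_)
  rw [norm_eq_abs, abs_of_nonneg (le_max_right _ _)]
  exact max_le (by linarith [le_norm_self (f r)]) (norm_nonneg _)

theorem MeasureTheory.Integrable.min_const (hf : Integrable f μ) {t : ℝ} (ht : 0 ≤ t) :
    Integrable (fun r => min (f r) t) μ := by
  refine (hf.sub (hf.max_sub_const_zero ht)).congr (ae_of_all _ fun r => ?_)
  exact sub_max_sub_zero (f r) t

theorem integral_min_const (hf : Integrable f μ) {t : ℝ} (ht : 0 ≤ t) :
    ∫ r, min (f r) t ∂μ = ∫ r, f r ∂μ - ∫ r, max (f r - t) 0 ∂μ := by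
  simp only [← sub_max_sub_zero (f _) t]
  exact integral_sub hf (hf.max_sub_const_zero ht)

end Majorization

section Entropy

variable {α : Type*} [MeasurableSpace α] {μ : Measure α} {f g : α → ℝ}

theorem integrable_mulLogUpper_comp (hf : AEStronglyMeasurable f μ)
    (hent : Integrable (fun r => f r * log (f r)) μ) :
    Integrable (fun r => mulLogUpper (f r)) μ :=
  hent.abs.mono' (continuous_mulLogUpper.comp_aestronglyMeasurable hf) (ae_of_all _ fun r => by
    rw [norm_of_nonneg (mulLogUpper_nonneg _)]
    exact mulLogUpper_le_abs_mul_log _)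

theorem integrable_mulLogLower_comp (hf : Integrable f μ)
    (hent : Integrable (fun r => f r * log (f r)) μ) :
    Integrable (fun r => mulLogLower (f r)) μ := by
  refine ((hf.sub hent).add (integrable_mulLogUpper_comp hf.1 hent)).congr
    (ae_of_all _ fun r => ?_)
  simp only [Pi.add_apply, Pi.sub_apply]
  linarith [mul_log_eq_sub_add (f r)]

theorem integral_mul_log_eq (hf : Integrable f μ)
    (hent : Integrable (fun r => f r * log (f r)) μ) :
    ∫ r, f r * log (f r) ∂μ =
      ∫ r, f r ∂μ - ∫ r, mulLogLower (f r) ∂μ + ∫ r, mulLogUpper (f r) ∂μ := by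
  have hL := integrable_mulLogLower_comp hf hent
  simp_rw [mul_log_eq_sub_add]
  rw [integral_add (f := fun r => f r - mulLogLower (f r)) (hf.sub hL)
    (integrable_mulLogUpper_comp hf.1 hent), integral_sub hf hL]

theorem integral_mulLogUpper_le (hf : Integrable f μ) (hg : Integrable g μ)
    (hUf : Integrable (fun r => mulLogUpper (f r)) μ)
    (hUg : Integrable (fun r => mulLogUpper (g r)) μ)
    (hmaj : ∀ t : ℝ, 0 ≤ t → ∫ r, max (g r - t) 0 ∂μ ≤ ∫ r, max (f r - t) 0 ∂μ) :
    ∫ r, mulLogUpper (g r) ∂μ ≤ ∫ r, mulLogUpper (f r) ∂μ := by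
  rw [← lintegral_ofReal_le_lintegral_ofReal_iff hUg hUf
    (ae_of_all _ fun _ => mulLogUpper_nonneg _) (ae_of_all _ fun _ => mulLogUpper_nonneg _)]
  simp_rw [← lintegral_Ioi_ofReal_max_sub_div]
  refine lintegral_lintegral_le_of_forall_lintegral_le hg hf
    (k := fun x t => ENNReal.ofReal (max (x - t) 0 / t)) (by fun_prop) ?_ ?_
  · filter_upwards [ae_restrict_mem measurableSet_Ioi] with t (ht : 1 < t)
    simp [(zero_lt_one.trans ht).le]
  · filter_upwards [ae_restrict_mem measurableSet_Ioi] with t (ht : 1 < t)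
    have ht0 : 0 ≤ t := zero_le_one.trans ht.le
    have hnn : ∀ x : ℝ, 0 ≤ max (x - t) 0 / t := fun x => div_nonneg (le_max_right _ _) ht0
    rw [lintegral_ofReal_le_lintegral_ofReal_iff ((hg.max_sub_const_zero ht0).div_const t)
      ((hf.max_sub_const_zero ht0).div_const t) (ae_of_all _ fun _ => hnn _)
      (ae_of_all _ fun _ => hnn _), integral_div, integral_div]
    exact div_le_div_of_nonneg_right (hmaj t ht0) ht0

theorem integral_mulLogLower_le (hf : Integrable f μ) (hg : Integrable g μ)
    (hf0 : ∀ r, 0 ≤ f r) (hg0 : ∀ r, 0 ≤ g r)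
    (hLf : Integrable (fun r => mulLogLower (f r)) μ)
    (hLg : Integrable (fun r => mulLogLower (g r)) μ) (hfg : ∫ r, f r ∂μ = ∫ r, g r ∂μ)
    (hmaj : ∀ t : ℝ, 0 ≤ t → ∫ r, max (g r - t) 0 ∂μ ≤ ∫ r, max (f r - t) 0 ∂μ) :
    ∫ r, mulLogLower (f r) ∂μ ≤ ∫ r, mulLogLower (g r) ∂μ := by
  rw [← lintegral_ofReal_le_lintegral_ofReal_iff hLf hLg
    (ae_of_all _ fun r => mulLogLower_nonneg (hf0 r))
    (ae_of_all _ fun r => mulLogLower_nonneg (hg0 r))]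
  simp_rw [← lintegral_Ioc_ofReal_min_div (hf0 _), ← lintegral_Ioc_ofReal_min_div (hg0 _)]
  refine lintegral_lintegral_le_of_forall_lintegral_le hf hg
    (k := fun x t => ENNReal.ofReal (min x t / t)) (by fun_prop) ?_ ?_
  · filter_upwards [ae_restrict_mem measurableSet_Ioc] with t ht
    simp [ht.1.le]
  · filter_upwards [ae_restrict_mem measurableSet_Ioc] with t ht
    have ht0 : 0 ≤ t := ht.1.le
    rw [lintegral_ofReal_le_lintegral_ofReal_iff ((hf.min_const ht0).div_const t)
      ((hg.min_const ht0).div_const t)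
      (ae_of_all _ fun r => div_nonneg (le_min (hf0 r) ht0) ht0)
      (ae_of_all _ fun r => div_nonneg (le_min (hg0 r) ht0) ht0), integral_div, integral_div,
      integral_min_const hf ht0, integral_min_const hg ht0, hfg]
    exact div_le_div_of_nonneg_right (by linarith [hmaj t ht0]) ht0

end Entropy

/-- Continuous majorization `f ≻ g` implies `h(f) ≤ h(g)` for the Shannon
differential entropies `h(f) = −∫ f ln f` (assuming they exist). -/
theorem entropy_antitone_under_majorization
    {A : Type*} [MeasureSpace A] (f g : A → ℝ)
    (hf_nonneg : ∀ r, 0 ≤ f r) (hg_nonneg : ∀ r, 0 ≤ g r)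
    (hf_int : Integrable f) (hg_int : Integrable g)
    (hf_prob : ∫ r, f r = 1) (hg_prob : ∫ r, g r = 1)
    (hmaj : ∀ t : ℝ, 0 ≤ t → ∫ r, max (g r - t) 0 ≤ ∫ r, max (f r - t) 0)
    (hf_ent : Integrable (fun r => f r * Real.log (f r)))
    (hg_ent : Integrable (fun r => g r * Real.log (g r))) :
    -∫ r, f r * Real.log (f r) ≤ -∫ r, g r * Real.log (g r) := by
  have hlower := integral_mulLogLower_le hf_int hg_int hf_nonneg hg_nonneg
    (integrable_mulLogLower_comp hf_int hf_ent) (integrable_mulLogLower_comp hg_int hg_ent)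
    (hf_prob.trans hg_prob.symm) hmaj
  have hupper := integral_mulLogUpper_le hf_int hg_int
    (integrable_mulLogUpper_comp hf_int.1 hf_ent) (integrable_mulLogUpper_comp hg_int.1 hg_ent)
    hmaj
  rw [integral_mul_log_eq hf_int hf_ent, integral_mul_log_eq hg_int hg_ent, hf_prob, hg_prob]
  linarith
end
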